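/- arXiv:2508.21336 — 4 statements merged into one kernel-verified Lean document; each statement's English description precedes it below -/
import Mathlib

section
/- Let Γ = Cay(G, S) be a finite connected Cayley graph of a group G, and let N = N_{Aut(Γ)}(R(G)) be the normalizer of R(G) in Aut(Γ). Then for every vertex v of Γ, the stabilizer N_v acts faithfully on the set of neighbours of v; that is, if an element of N fixes v and fixes every neighbour of v, then it is the identity. -/
open Equiv MulAction

namespace HAT

variable {V : Type*}

/-- The automorphism group of a simple graph, as a subgroup of the permutation group
of the vertex set. -/
def aut (Γ : SimpleGraph V) : Subgroup (Equiv.Perm V) where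
  carrier := {g | ∀ u v : V, Γ.Adj (g u) (g v) ↔ Γ.Adj u v}
  one_mem' := by intro u v; simp
  mul_mem' := by
    intro a b ha hb u v
    simpa [Equiv.Perm.mul_apply] using (ha (b u) (b v)).trans (hb u v)
  inv_mem' := by
    intro g hg u v
    simpa using (hg (g⁻¹ u) (g⁻¹ v)).symm

/-- The valency (degree) of a vertex: the number of neighbours. -/
noncomputable def deg (Γ : SimpleGraph V) (v : V) : ℕ := (Γ.neighborSet v).ncard

/-- `G` is transitive on the vertices. -/
def VertexTrans (G : Subgroup (Equiv.Perm V)) : Prop := ∀ u v : V, ∃ g ∈ G, g u = v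

/-- `G` is transitive on the edges. -/
def EdgeTrans (Γ : SimpleGraph V) (G : Subgroup (Equiv.Perm V)) : Prop :=
  ∀ ⦃u v x y : V⦄, Γ.Adj u v → Γ.Adj x y →
    ∃ g ∈ G, (g u = x ∧ g v = y) ∨ (g u = y ∧ g v = x)

/-- `G` is transitive on the arcs (ordered pairs of adjacent vertices). -/
def ArcTrans (Γ : SimpleGraph V) (G : Subgroup (Equiv.Perm V)) : Prop :=
  ∀ ⦃u v x y : V⦄, Γ.Adj u v → Γ.Adj x y → ∃ g ∈ G, g u = x ∧ g v = y

/-- `Γ` is `G`-half-arc-transitive: `G` is vertex- and edge- but not arc-transitive. -/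
def IsHAT (Γ : SimpleGraph V) (G : Subgroup (Equiv.Perm V)) : Prop :=
  VertexTrans G ∧ EdgeTrans Γ G ∧ ¬ ArcTrans Γ G

/-- The Cayley graph `Cay(G, S)` of a group `G` with respect to an inverse-closed subset
`S ⊆ G \ {1}`: vertices are the elements of `G`, with `x` adjacent to `y` iff `y = s * x`
for some `s ∈ S`. -/
def cayley (G : Type*) [Group G] (S : Set G) : SimpleGraph G where
  Adj x y := x ≠ y ∧ (y * x⁻¹ ∈ S ∨ x * y⁻¹ ∈ S)
  symm := ⟨by rintro x y ⟨h, hs⟩; exact ⟨h.symm, hs.symm⟩⟩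
  loopless := ⟨by rintro x ⟨h, -⟩; exact h rfl⟩

/-- The right regular representation `R(G) = {R(g) : g ∈ G}`, where `R(g) : x ↦ x * g`,
as a subgroup of the symmetric group on `G`. -/
def rightRegular (G : Type*) [Group G] : Subgroup (Equiv.Perm G) where
  carrier := Set.range fun g : G => Equiv.mulRight g
  one_mem' := ⟨1, by ext x; simp⟩
  mul_mem' := by
    rintro - - ⟨a, rfl⟩ ⟨b, rfl⟩
    exact ⟨b * a, by ext x; simp [mul_assoc]⟩
  inv_mem' := by
    rintro - ⟨a, rfl⟩
    exact ⟨a⁻¹, by ext x; simp⟩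

/-- **Lemma.** Let `Γ = Cay(G, S)` be a finite connected Cayley graph and let
`N = N_{Aut(Γ)}(R(G))` be the normalizer of `R(G)` in `Aut(Γ)`.  Then for every vertex
`v`, the stabilizer `N_v` is faithful on the neighbourhood of `v`: any element of `N`
fixing `v` and all of its neighbours is the identity. -/
theorem lem_cay_faith (G : Type) [Group G] [Finite G] (S : Set G)
    (hS1 : (1 : G) ∉ S) (hSinv : ∀ s ∈ S, s⁻¹ ∈ S)
    (hconn : (cayley G S).Connected)
    (v : G) (g : Equiv.Perm G)
    (hg : g ∈ aut (cayley G S) ⊓ Subgroup.normalizer (rightRegular G : Set (Equiv.Perm G)))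
    (hv : g v = v) (hnbrs : ∀ w : G, (cayley G S).Adj v w → g w = w) :
    g = 1 := by
  obtain ⟨-, hgnorm⟩ := hg
  set Q : G → Prop := fun a => ∀ y, g (y * a) = g y * a with hQ
  have hQ1 : Q 1 := by intro y; simp
  have hQmul : ∀ a b, Q a → Q b → Q (a * b) := by
    intro a b ha hb y
    rw [← mul_assoc, hb, ha, mul_assoc]
  have hQs : ∀ s ∈ S, Q (v⁻¹ * s * v) := by
    intro s hs
    have hmem : g * Equiv.mulRight (v⁻¹ * s * v) * g⁻¹ ∈ rightRegular G :=
      (Subgroup.mem_normalizer_iff.mp hgnorm (Equiv.mulRight (v⁻¹ * s * v))).mp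
        ⟨v⁻¹ * s * v, rfl⟩
    obtain ⟨b, hb⟩ := hmem
    have key : ∀ y, g (y * (v⁻¹ * s * v)) = g y * b := by
      intro y
      have := congrArg (fun (p : Equiv.Perm G) => p (g y)) hb
      simpa [Equiv.Perm.mul_apply, mul_assoc] using this.symm
    have hadj : (cayley G S).Adj v (s * v) := by
      constructor
      · intro h
        apply hS1
        have : s = 1 := by
          have := mul_right_cancel (h.symm.trans (one_mul v).symm)
          exact this
        rwa [this] at hs
      · left; simpa using hs
    have hfix : g (s * v) = s * v := hnbrs _ hadj
    have hvb : v * b = s * v := by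
      have h1 := key v
      have h2 : v * (v⁻¹ * s * v) = s * v := by group
      rw [h2, hfix, hv] at h1
      exact h1.symm
    have hba : b = v⁻¹ * s * v := by
      have : v * b = v * (v⁻¹ * s * v) := by rw [hvb]; group
      exact mul_left_cancel this
    intro y
    rw [key y, hba]
  have hstep : ∀ x y : G, (cayley G S).Adj x y → Q (v⁻¹ * x) → Q (v⁻¹ * y) := by
    intro x y hadj hx
    have hs : y * x⁻¹ ∈ S := by
      rcases hadj.2 with h | h
      · exact h
      · have := hSinv _ h
        simpa using this
    have : v⁻¹ * y = (v⁻¹ * (y * x⁻¹) * v) * (v⁻¹ * x) := by group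
    rw [this]
    exact hQmul _ _ (hQs _ hs) hx
  have hwalk : ∀ x y : G, (cayley G S).Walk x y → Q (v⁻¹ * x) → Q (v⁻¹ * y) := by
    intro x y w
    induction w with
    | nil => exact id
    | cons h p ih => intro hx; exact ih (hstep _ _ h hx)
  have hall : ∀ x : G, Q (v⁻¹ * x) := by
    intro x
    refine hwalk v x (hconn.preconnected v x).some ?_
    simpa using hQ1
  ext x
  have := hall x v
  have h2 : v * (v⁻¹ * x) = x := by group
  rw [h2, hv, h2] at this
  simpa using this

end HAT
end

section
/- Let Γ be a finite connected tetravalent G-half-arc-transitive graph with G ≤ Aut(Γ), and let N be a solvable normal subgroup of G. If G is non-solvable, then Γ is a normal cover of the normal quotient graph Γ_N (i.e. Γ_N has valency 4), and N is semiregular on V(Γ). -/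
open Equiv MulAction

namespace HAT

variable {V : Type*}

/-- The normal quotient graph of `Γ` by (the orbits of) a subgroup `N` of permutations:
vertices are the `N`-orbits, two distinct orbits being adjacent iff some vertex of one is
adjacent in `Γ` to some vertex of the other. -/
def quotGraph (Γ : SimpleGraph V) (N : Subgroup (Equiv.Perm V)) :
    SimpleGraph (Quotient (MulAction.orbitRel N V)) where
  Adj A B := A ≠ B ∧ ∃ u v : V, Γ.Adj u v ∧
    Quotient.mk (MulAction.orbitRel N V) u = A ∧ Quotient.mk (MulAction.orbitRel N V) v = B
  symm := ⟨by rintro A B ⟨h, u, v, huv, hu, hv⟩; exact ⟨h.symm, v, u, huv.symm, hv, hu⟩⟩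
  loopless := ⟨by rintro A ⟨h, -⟩; exact h rfl⟩

/-- `N` is semiregular on the vertices: only the identity fixes a point. -/
def Semiregular (N : Subgroup (Equiv.Perm V)) : Prop :=
  ∀ g ∈ N, ∀ v : V, g v = v → g = 1

/-- `N` is a normal subgroup of `G` (both regarded as subgroups of the symmetric group). -/
def NormalIn (N G : Subgroup (Equiv.Perm V)) : Prop :=
  N ≤ G ∧ ∀ g ∈ G, ∀ x ∈ N, g * x * g⁻¹ ∈ N

/-! ### Auxiliary lemmas -/

lemma Equiv.Perm.inv_apply_self {X : Type*} (f : Equiv.Perm X) (x : X) : f⁻¹ (f x) = x :=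
  Equiv.symm_apply_apply f x

lemma sum_filter_swap {X : Type*} [Fintype X] (r : X → X → Prop) [DecidableRel r] :
    ∑ x : X, (Finset.univ.filter (fun y => r x y)).card
      = ∑ x : X, (Finset.univ.filter (fun y => r y x)).card := by
  simp_rw [Finset.card_filter]
  rw [Finset.sum_comm]

lemma const_eq_of_sum_eq {X : Type*} [Fintype X] [Nonempty X] {c d : X → ℕ}
    (hc : ∀ x y, c x = c y) (hd : ∀ x y, d x = d y)
    (h : ∑ x, c x = ∑ x, d x) (x : X) : c x = d x := by
  have hc' : ∑ y : X, c y = Fintype.card X * c x := by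
    rw [Finset.sum_congr rfl fun y _ => hc y x, Finset.sum_const, Fintype.card, smul_eq_mul]
  have hd' : ∑ y : X, d y = Fintype.card X * d x := by
    rw [Finset.sum_congr rfl fun y _ => hd y x, Finset.sum_const, Fintype.card, smul_eq_mul]
  have hcard : Fintype.card X ≠ 0 := Fintype.card_ne_zero
  rw [hc', hd'] at h
  exact Nat.eq_of_mul_eq_mul_left (Nat.pos_of_ne_zero hcard) h

lemma filter_card_perm {X : Type*} [Fintype X] (e : Equiv.Perm X) (P Q : X → Prop)
    [DecidablePred P] [DecidablePred Q] (h : ∀ x, P x ↔ Q (e x)) :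
    (Finset.univ.filter P).card = (Finset.univ.filter Q).card := by
  apply Finset.card_bij (fun x _ => e x)
  · intro a ha
    simp only [Finset.mem_filter, Finset.mem_univ, true_and] at ha ⊢
    exact (h a).mp ha
  · intro a _ b _ hab
    exact e.injective hab
  · intro b hb
    simp only [Finset.mem_filter, Finset.mem_univ, true_and] at hb ⊢
    exact ⟨e.symm b, (h _).mpr (by simpa using hb), by simp⟩

lemma deg_eq_filter {X : Type*} [Fintype X] (Δ : SimpleGraph X) (v : X)
    [DecidablePred fun u => Δ.Adj v u] :
    deg Δ v = (Finset.univ.filter (fun u => Δ.Adj v u)).card := by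
  haveI : Fintype (Δ.neighborSet v) := Fintype.ofFinite _
  rw [deg, Set.ncard_eq_toFinset_card']
  congr 1
  ext u
  simp [Set.mem_toFinset]

lemma solvable_of_commute_two_orbits {X : Type*} (ρ : Equiv.Perm X) (x0 x1 : X)
    (hcov : ∀ x : X, (∃ k : ℤ, (ρ ^ k) x0 = x) ∨ (∃ k : ℤ, (ρ ^ k) x1 = x))
    (S : Subgroup (Equiv.Perm X)) (hS : ∀ s ∈ S, s * ρ = ρ * s) :
    IsSolvable ↥S := by
  classical
  have hcomm : ∀ s ∈ S, ∀ (k : ℤ) (x : X), s ((ρ ^ k) x) = (ρ ^ k) (s x) := by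
    intro s hs k x
    have h : s * ρ ^ k = ρ ^ k * s := (Commute.zpow_right (hS s hs) k)
    calc s ((ρ ^ k) x) = (s * ρ ^ k) x := rfl
      _ = (ρ ^ k * s) x := by rw [h]
      _ = (ρ ^ k) (s x) := rfl
  set Or : X → Set X := fun z => {x | ∃ k : ℤ, (ρ ^ k) z = x} with hOr
  have hself : ∀ z, z ∈ Or z := fun z => ⟨0, rfl⟩
  have hcl : ∀ z x, x ∈ Or z → ∀ k : ℤ, (ρ ^ k) x ∈ Or z := by
    rintro z x ⟨m, rfl⟩ k
    exact ⟨k + m, by rw [zpow_add, Equiv.Perm.mul_apply]⟩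
  have hmapgen : ∀ s ∈ S, ∀ z w, s z ∈ Or w → ∀ x ∈ Or z, s x ∈ Or w := by
    rintro s hs z w hz x ⟨m, rfl⟩
    rw [hcomm s hs m z]
    exact hcl w _ hz m
  have hpow : ∀ (z : X), ∀ s ∈ S, ∀ (a : ℤ), s z = (ρ ^ a) z →
      ∀ (m : ℤ), s ((ρ ^ m) z) = (ρ ^ (a + m)) z := by
    intro z s hs a ha m
    rw [hcomm s hs m z, ha, ← Equiv.Perm.mul_apply, ← zpow_add, add_comm m a]
  by_cases h01 : ∃ j : ℤ, (ρ ^ j) x0 = x1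
  · -- single orbit : S is abelian
    obtain ⟨j, hj⟩ := h01
    have hcov0 : ∀ x : X, ∃ k : ℤ, (ρ ^ k) x0 = x := by
      intro x
      rcases hcov x with h | ⟨k, hk⟩
      · exact h
      · exact ⟨k + j, by rw [zpow_add, Equiv.Perm.mul_apply, hj, hk]⟩
    have habel : ∀ a b : ↥S, a * b = b * a := by
      intro a b
      obtain ⟨ka, hka⟩ := hcov0 ((a : Equiv.Perm X) x0)
      obtain ⟨kb, hkb⟩ := hcov0 ((b : Equiv.Perm X) x0)
      apply Subtype.ext; apply Equiv.ext; intro x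
      obtain ⟨m, rfl⟩ := hcov0 x
      show (a : Equiv.Perm X) ((b : Equiv.Perm X) _) = (b : Equiv.Perm X) ((a : Equiv.Perm X) _)
      rw [hpow x0 b b.2 kb hkb.symm m, hpow x0 a a.2 ka hka.symm (kb + m),
        hpow x0 a a.2 ka hka.symm m, hpow x0 b b.2 kb hkb.symm (ka + m),
        add_left_comm]
    exact isSolvable_of_comm habel
  · -- two disjoint orbits
    have hdisj : ∀ x, x ∈ Or x0 → x ∈ Or x1 → False := by
      rintro x ⟨k, hk⟩ ⟨l, hl⟩
      exact h01 ⟨-l + k, by rw [zpow_add, Equiv.Perm.mul_apply, hk, ← hl,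
        ← Equiv.Perm.mul_apply, ← zpow_add, neg_add_cancel, zpow_zero, Equiv.Perm.one_apply]⟩
    have hinvor : ∀ s ∈ S, ∀ z, (s : Equiv.Perm X) z ∈ Or z → (s⁻¹ : Equiv.Perm X) z ∈ Or z := by
      rintro s hs z ⟨a, ha⟩
      refine ⟨-a, ?_⟩
      have h2 : s ((ρ ^ (-a : ℤ)) z) = z := by
        rw [hpow z s hs a ha.symm (-a), add_neg_cancel, zpow_zero, Equiv.Perm.one_apply]
      have h3 := congrArg (s⁻¹ : Equiv.Perm X) h2
      rwa [Equiv.Perm.inv_apply_self] at h3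
    have hkey : ∀ s ∈ S, (s : Equiv.Perm X) x0 ∈ Or x0 → (s : Equiv.Perm X) x1 ∈ Or x1 := by
      intro s hs h0
      rcases hcov (s x1) with h1 | h1
      · exfalso
        have h3 : (s⁻¹ : Equiv.Perm X) (s x1) = x1 := Equiv.Perm.inv_apply_self s x1
        have h4 : x1 ∈ Or x0 := by
          rw [← h3]
          exact hmapgen s⁻¹ (S.inv_mem hs) x0 x0 (hinvor s hs x0 h0) _ h1
        exact hdisj x1 h4 (hself x1)
      · exact h1
    have hswap1 : ∀ s ∈ S, (s : Equiv.Perm X) x0 ∈ Or x1 → (s : Equiv.Perm X) x1 ∈ Or x0 := by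
      intro s hs h0
      rcases hcov (s x1) with h1 | h1
      · exact h1
      · exfalso
        obtain ⟨c, hc⟩ := h0
        have hsi : (s⁻¹ : Equiv.Perm X) x1 ∈ Or x0 := by
          refine ⟨-c, ?_⟩
          have h2 := congrArg (s⁻¹ : Equiv.Perm X) hc
          rw [Equiv.Perm.inv_apply_self] at h2
          have h5 : (ρ ^ (-c : ℤ)) ((ρ ^ c) x1) = x1 := by
            rw [← Equiv.Perm.mul_apply, ← zpow_add, neg_add_cancel, zpow_zero,
              Equiv.Perm.one_apply]
          rw [← h5, hcomm s⁻¹ (S.inv_mem hs) (-c) ((ρ ^ c) x1), h2]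
        have h3 : (s⁻¹ : Equiv.Perm X) (s x1) = x1 := Equiv.Perm.inv_apply_self s x1
        have h4 : x1 ∈ Or x0 := by
          rw [← h3]
          exact hmapgen s⁻¹ (S.inv_mem hs) x1 x0 hsi _ h1
        exact hdisj x1 h4 (hself x1)
    have hnot0 : ∀ s : ↥S, (s : Equiv.Perm X) x0 ∉ Or x0 → (s : Equiv.Perm X) x0 ∈ Or x1 := by
      intro s hs
      rcases hcov ((s : Equiv.Perm X) x0) with h | h
      · exact absurd h hs
      · exact h
    set S₀ : Subgroup ↥S :=
      { carrier := {s : ↥S | (s : Equiv.Perm X) x0 ∈ Or x0}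
        one_mem' := hself x0
        mul_mem' := by
          intro a b ha hb
          exact hmapgen a a.2 x0 x0 ha _ hb
        inv_mem' := by
          intro a ha
          exact hinvor a a.2 x0 ha } with hS₀def
    have hmemS₀ : ∀ s : ↥S, s ∈ S₀ ↔ (s : Equiv.Perm X) x0 ∈ Or x0 := fun s => Iff.rfl
    -- S₀ is abelian
    have habel : ∀ a b : ↥S, a ∈ S₀ → b ∈ S₀ → a * b = b * a := by
      intro a b ha hb
      have ha0 := (hmemS₀ a).mp ha
      have hb0 := (hmemS₀ b).mp hb
      obtain ⟨ka', hka'⟩ := hkey a a.2 ha0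
      obtain ⟨kb', hkb'⟩ := hkey b b.2 hb0
      obtain ⟨ka, hka⟩ := ha0
      obtain ⟨kb, hkb⟩ := hb0
      apply Subtype.ext; apply Equiv.ext; intro x
      show (a : Equiv.Perm X) ((b : Equiv.Perm X) x) = (b : Equiv.Perm X) ((a : Equiv.Perm X) x)
      rcases hcov x with ⟨m, rfl⟩ | ⟨m, rfl⟩
      · rw [hpow x0 b b.2 kb hkb.symm m, hpow x0 a a.2 ka hka.symm (kb + m),
          hpow x0 a a.2 ka hka.symm m, hpow x0 b b.2 kb hkb.symm (ka + m), add_left_comm]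
      · rw [hpow x1 b b.2 kb' hkb'.symm m, hpow x1 a a.2 ka' hka'.symm (kb' + m),
          hpow x1 a a.2 ka' hka'.symm m, hpow x1 b b.2 kb' hkb'.symm (ka' + m), add_left_comm]
    have hnormal : S₀.Normal := by
      constructor
      intro n hn g
      rw [hmemS₀]
      have h1 : ((g * n * g⁻¹ : ↥S) : Equiv.Perm X) x0
          = (g : Equiv.Perm X) ((n : Equiv.Perm X) (((g⁻¹ : ↥S) : Equiv.Perm X) x0)) := rfl
      rw [h1]
      by_cases hg : g ∈ S₀
      · have h2 := hinvor g g.2 x0 hg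
        have h3 : ((g⁻¹ : ↥S) : Equiv.Perm X) x0 ∈ Or x0 := h2
        exact hmapgen g g.2 x0 x0 hg _ (hmapgen n n.2 x0 x0 hn _ h3)
      · have hgx : (g : Equiv.Perm X) x0 ∈ Or x1 := hnot0 g hg
        have hginv : ((g⁻¹ : ↥S) : Equiv.Perm X) x0 ∈ Or x1 := by
          apply hnot0
          intro hc
          exact hg (hinvor g⁻¹ (g⁻¹).2 x0 hc)
        have h4 : (n : Equiv.Perm X) (((g⁻¹ : ↥S) : Equiv.Perm X) x0) ∈ Or x1 :=
          hmapgen n n.2 x1 x1 (hkey n n.2 hn) _ hginv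
        exact hmapgen g g.2 x1 x0 (hswap1 g g.2 hgx) _ h4
    haveI := hnormal
    have hsq : ∀ s : ↥S, s * s ∈ S₀ := by
      intro s
      by_cases hs : s ∈ S₀
      · exact S₀.mul_mem hs hs
      · rw [hmemS₀]
        have h1 : ((s * s : ↥S) : Equiv.Perm X) x0
            = (s : Equiv.Perm X) ((s : Equiv.Perm X) x0) := rfl
        rw [h1]
        exact hmapgen s s.2 x1 x0 (hswap1 s s.2 (hnot0 s hs)) _ (hnot0 s hs)
    have hQcomm : ∀ q r : ↥S ⧸ S₀, q * r = r * q := by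
      have hq2 : ∀ q : ↥S ⧸ S₀, q * q = 1 := by
        intro q
        induction q using QuotientGroup.induction_on with
        | H s =>
          rw [← QuotientGroup.mk_mul, QuotientGroup.eq_one_iff]
          exact hsq s
      have hqinv : ∀ q : ↥S ⧸ S₀, q⁻¹ = q := fun q => inv_eq_of_mul_eq_one_right (hq2 q)
      intro q r
      calc q * r = ((q * r)⁻¹)⁻¹ := by rw [inv_inv]
        _ = (r⁻¹ * q⁻¹)⁻¹ := by rw [mul_inv_rev]
        _ = (r * q)⁻¹ := by rw [hqinv q, hqinv r]
        _ = r * q := hqinv _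
    haveI hQs : Group.IsSolvable (↥S ⧸ S₀) := isSolvable_of_comm hQcomm
    haveI hS₀s : Group.IsSolvable ↥S₀ := isSolvable_of_comm
      (fun a b => Subtype.ext (habel a b a.2 b.2))
    exact solvable_of_ker_le_range S₀.subtype (QuotientGroup.mk' S₀)
      (by rw [QuotientGroup.ker_mk', Subgroup.range_subtype])


lemma three_nbrs {X : Type*} [Fintype X] (Δ : SimpleGraph X) (hdeg : ∀ x, deg Δ x ≤ 2)
    {w u z z' : X} (h1 : Δ.Adj w u) (h2 : Δ.Adj w z) (h3 : Δ.Adj w z')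
    (n1 : u ≠ z) (n2 : u ≠ z') (n3 : z ≠ z') : False := by
  have hsub : ({u, z, z'} : Set X) ⊆ Δ.neighborSet w := by
    intro x hx
    rcases hx with rfl | rfl | rfl
    exacts [h1, h2, h3]
  have h3c : ({u, z, z'} : Set X).ncard = 3 := by
    rw [Set.ncard_insert_of_notMem (by simp [n1, n2]) (Set.toFinite _), Set.ncard_pair n3]
  have hle := Set.ncard_le_ncard hsub (Set.toFinite _)
  have := hdeg w
  rw [h3c] at hle
  exact absurd (hle.trans this) (by norm_num)

open Classical in
noncomputable def oth {X : Type*} (Δ : SimpleGraph X) (u w : X) : X :=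
  if hz : ∃ z, Δ.Adj w z ∧ z ≠ u then hz.choose else u

lemma oth_adj {X : Type*} (Δ : SimpleGraph X) {u w : X} (h : Δ.Adj u w) :
    Δ.Adj w (oth Δ u w) := by
  unfold oth; split
  case isTrue hex => exact hex.choose_spec.1
  case isFalse => exact h.symm

lemma oth_uniq {X : Type*} [Fintype X] (Δ : SimpleGraph X) (hdeg : ∀ x, deg Δ x ≤ 2)
    {u w z : X} (h : Δ.Adj u w) (hz : Δ.Adj w z) (hne : z ≠ u) : z = oth Δ u w := by
  unfold oth; split
  case isTrue hex =>
    by_contra hne2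
    exact three_nbrs Δ hdeg h.symm hz hex.choose_spec.1 hne.symm
      (Ne.symm hex.choose_spec.2) hne2
  case isFalse hex => exact absurd ⟨z, hz, hne⟩ hex

lemma oth_oth {X : Type*} [Fintype X] (Δ : SimpleGraph X) (hdeg : ∀ x, deg Δ x ≤ 2)
    {u w : X} (h : Δ.Adj u w) : oth Δ (oth Δ u w) w = u := by
  by_cases ho : oth Δ u w = u
  · conv_lhs => rw [ho]
    exact ho
  · exact (oth_uniq Δ hdeg (oth_adj Δ h).symm h.symm (fun hc => ho (hc ▸ rfl)) ).symm

lemma oth_equivariant {X : Type*} [Fintype X] (Δ : SimpleGraph X) (hdeg : ∀ x, deg Δ x ≤ 2)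
    (g : Equiv.Perm X) (haut : ∀ u v : X, Δ.Adj (g u) (g v) ↔ Δ.Adj u v)
    {u w : X} (h : Δ.Adj u w) : g (oth Δ u w) = oth Δ (g u) (g w) := by
  by_cases hex : ∃ z, Δ.Adj w z ∧ z ≠ u
  · obtain ⟨z, hz, hne⟩ := hex
    have h1 : oth Δ u w ≠ u := by
      intro hc
      have h2 := oth_uniq Δ hdeg h hz hne
      rw [hc] at h2
      exact hne h2
    have h3 : Δ.Adj (g w) (g (oth Δ u w)) := (haut w (oth Δ u w)).mpr (oth_adj Δ h)
    have h4 : g (oth Δ u w) ≠ g u := fun hc => h1 (g.injective hc)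
    exact oth_uniq Δ hdeg ((haut u w).mpr h) h3 h4
  · have h1 : oth Δ u w = u := by unfold oth; rw [dif_neg hex]
    have h2 : ¬ ∃ z, Δ.Adj (g w) z ∧ z ≠ g u := by
      rintro ⟨z, hz, hne⟩
      refine hex ⟨g⁻¹ z, ?_, ?_⟩
      · have := (haut w (g⁻¹ z)).mp (by simpa using hz)
        exact this
      · intro hc
        exact hne (by rw [← hc]; simp)
    have h3 : oth Δ (g u) (g w) = g u := by unfold oth; rw [dif_neg h2]
    rw [h1, h3]

lemma aut_solvable_of_deg_le_two {X : Type*} [Fintype X] (Δ : SimpleGraph X)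
    (hconn : Δ.Connected) (hdeg : ∀ x, deg Δ x ≤ 2)
    (H : Subgroup (Equiv.Perm X)) (hH : H ≤ aut Δ) : IsSolvable ↥H := by
  classical
  by_cases hedge : ∃ a b : X, Δ.Adj a b
  case neg =>
    have hsub : ∀ x y : X, x = y := by
      intro x y
      obtain ⟨w⟩ := hconn.preconnected x y
      cases w with
      | nil => rfl
      | cons h _ => exact absurd ⟨_, _, h⟩ hedge
    exact isSolvable_of_comm fun a b =>
      Subtype.ext (Equiv.ext fun x => hsub _ _)
  case pos =>
  obtain ⟨x0, y0, h0⟩ := hedge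
  have hnbr : ∀ v : X, ∃ z, Δ.Adj v z := by
    intro v
    by_cases hv : v = x0
    · subst hv; exact ⟨y0, h0⟩
    · obtain ⟨w⟩ := hconn.preconnected v x0
      cases w with
      | nil => exact absurd rfl hv
      | cons h _ => exact ⟨_, h⟩
  -- the arc system
  let A := {p : X × X // Δ.Adj p.1 p.2}
  let ρf : A → A := fun p => ⟨(p.1.2, oth Δ p.1.1 p.1.2), oth_adj Δ p.2⟩
  let πf : A → A := fun p => ⟨(oth Δ p.1.2 p.1.1, p.1.1), (oth_adj Δ p.2.symm).symm⟩
  have hli : ∀ p : A, πf (ρf p) = p := by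
    rintro ⟨⟨u, w⟩, h⟩
    apply Subtype.ext
    exact Prod.ext (oth_oth Δ hdeg h) rfl
  have hri : ∀ p : A, ρf (πf p) = p := by
    rintro ⟨⟨u, w⟩, h⟩
    apply Subtype.ext
    exact Prod.ext rfl (oth_oth Δ hdeg h.symm)
  let ρ : Equiv.Perm A := ⟨ρf, πf, hli, hri⟩
  let τ : Equiv.Perm A := ⟨fun p => ⟨(p.1.2, p.1.1), p.2.symm⟩,
    fun p => ⟨(p.1.2, p.1.1), p.2.symm⟩, fun p => rfl, fun p => rfl⟩
  have hττ : τ * τ = 1 := Equiv.ext fun p => rfl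
  have hτinv : τ⁻¹ = τ := inv_eq_of_mul_eq_one_right hττ
  have hτρτ : τ * ρ * τ = ρ⁻¹ := Equiv.ext fun p => rfl
  have hconjk : ∀ k : ℤ, τ * ρ ^ k * τ = ρ ^ (-k) := by
    intro k
    have h1 : (MulAut.conj τ) ρ = ρ⁻¹ := by
      show τ * ρ * τ⁻¹ = ρ⁻¹
      rw [hτinv]; exact hτρτ
    have h2 := map_zpow (MulAut.conj τ) ρ k
    rw [h1] at h2
    have h3 : (MulAut.conj τ) (ρ ^ k) = τ * ρ ^ k * τ := by
      show τ * ρ ^ k * τ⁻¹ = _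
      rw [hτinv]
    rw [h3] at h2
    rw [h2, inv_zpow, zpow_neg]
  have htk : ∀ (k : ℤ) (p : A), τ ((ρ ^ k) p) = (ρ ^ (-k)) (τ p) := by
    intro k p
    have h1 := congrArg (fun e : Equiv.Perm A => e (τ p)) (hconjk k)
    simp only [Equiv.Perm.mul_apply] at h1
    have h2 : τ (τ p) = p := by
      have := congrArg (fun e : Equiv.Perm A => e p) hττ
      simpa [Equiv.Perm.mul_apply] using this
    rw [h2] at h1
    exact h1
  -- base arc and reach set
  let a0 : A := ⟨(x0, y0), h0⟩
  let reach : A → Prop := fun x => (∃ k : ℤ, (ρ ^ k) a0 = x) ∨ (∃ k : ℤ, (ρ ^ k) (τ a0) = x)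
  have r_rho : ∀ x : A, reach x → reach (ρ x) := by
    rintro x (⟨k, hk⟩ | ⟨k, hk⟩)
    · exact Or.inl ⟨1 + k, by rw [zpow_add, zpow_one, Equiv.Perm.mul_apply, hk]⟩
    · exact Or.inr ⟨1 + k, by rw [zpow_add, zpow_one, Equiv.Perm.mul_apply, hk]⟩
  have r_tau : ∀ x : A, reach x → reach (τ x) := by
    rintro x (⟨k, hk⟩ | ⟨k, hk⟩)
    · exact Or.inr ⟨-k, by rw [← hk, htk]⟩
    · refine Or.inl ⟨-k, ?_⟩
      rw [← hk, htk]
      rfl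
  have hstep : ∀ (u w : X) (h : Δ.Adj u w), reach ⟨(u, w), h⟩ →
      ∀ (z : X) (hz : Δ.Adj w z), reach ⟨(w, z), hz⟩ := by
    intro u w h hr z hz
    by_cases huz : z = u
    · subst huz
      have h1 : (⟨(w, z), hz⟩ : A) = τ ⟨(z, w), h⟩ := Subtype.ext rfl
      rw [h1]
      exact r_tau _ hr
    · have h1 : (⟨(w, z), hz⟩ : A) = ρ ⟨(u, w), h⟩ :=
        Subtype.ext (Prod.ext rfl (oth_uniq Δ hdeg h hz huz))
      rw [h1]
      exact r_rho _ hr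
  have haux : ∀ (a b : X), Δ.Walk a b →
      (∃ u, ∃ hu : Δ.Adj u a, reach ⟨(u, a), hu⟩) →
      (∃ u, ∃ hu : Δ.Adj u b, reach ⟨(u, b), hu⟩) := by
    intro a b p
    induction p with
    | nil => exact id
    | cons h q ih =>
      rintro ⟨u, hu, hr⟩
      exact ih ⟨_, h, hstep u _ hu hr _ h⟩
  have hgood : ∀ w : X, ∃ u, ∃ hu : Δ.Adj u w, reach ⟨(u, w), hu⟩ := by
    intro w
    obtain ⟨p⟩ := hconn.preconnected y0 w
    exact haux y0 w p ⟨x0, h0, Or.inl ⟨0, rfl⟩⟩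
  have hcover : ∀ p : A, reach p := by
    rintro ⟨⟨x, y⟩, hxy⟩
    obtain ⟨u, hu, hr⟩ := hgood y
    by_cases hux : u = x
    · subst hux
      exact hr
    · have h1 : (⟨(x, y), hxy⟩ : A) = τ (ρ ⟨(u, y), hu⟩) :=
        Subtype.ext (Prod.ext (oth_uniq Δ hdeg hu hxy.symm (Ne.symm hux)) rfl)
      rw [h1]
      exact r_tau _ (r_rho _ hr)
  -- the action of H on arcs
  have hautH : ∀ h : ↥H, ∀ u v : X, Δ.Adj ((h : Equiv.Perm X) u) ((h : Equiv.Perm X) v)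
      ↔ Δ.Adj u v := fun h => hH h.2
  let ψ : ↥H →* Equiv.Perm A := MonoidHom.mk'
    (fun h => Equiv.subtypeEquiv (Equiv.prodCongr (h : Equiv.Perm X) (h : Equiv.Perm X))
      (fun p => (hautH h p.1 p.2).symm))
    (by
      intro a b
      apply Equiv.ext
      rintro ⟨⟨u, w⟩, hp⟩
      rfl)
  have hψapp : ∀ (h : ↥H) (p : A), ψ h p
      = ⟨((h : Equiv.Perm X) p.1.1, (h : Equiv.Perm X) p.1.2),
          (hautH h p.1.1 p.1.2).mpr p.2⟩ := by
    rintro h ⟨⟨u, w⟩, hp⟩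
    rfl
  have hψρ : ∀ h : ↥H, ψ h * ρ = ρ * ψ h := by
    intro h
    apply Equiv.ext
    rintro ⟨⟨u, w⟩, hp⟩
    show ψ h (ρ ⟨(u, w), hp⟩) = ρ (ψ h ⟨(u, w), hp⟩)
    rw [hψapp, hψapp]
    apply Subtype.ext
    exact Prod.ext rfl (oth_equivariant Δ hdeg (h : Equiv.Perm X) (hautH h) hp)
  haveI hrs : Group.IsSolvable ↥ψ.range := by
    apply solvable_of_commute_two_orbits ρ a0 (τ a0) hcover
    rintro s ⟨h, rfl⟩
    exact hψρ h
  have hψinj : Function.Injective ψ := by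
    intro a b hab
    apply Subtype.ext; apply Equiv.ext; intro v
    obtain ⟨z, hz⟩ := hnbr v
    have h1 : ψ a ⟨(v, z), hz⟩ = ψ b ⟨(v, z), hz⟩ := by rw [hab]
    rw [hψapp, hψapp] at h1
    exact congrArg (fun q : A => q.1.1) h1
  exact solvable_of_solvable_injective (MonoidHom.rangeRestrict_injective_iff.mpr hψinj)


/-- **Lemma.** Let `Γ` be a finite connected tetravalent `G`-half-arc-transitive graph
with `G ≤ Aut(Γ)`, and let `N` be a solvable normal subgroup of `G`.  If `G` is
non-solvable, then `Γ` is a normal cover of `Γ_N` (that is, `Γ_N` also has valency `4`)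
and `N` is semiregular on the vertices. -/
theorem lem_iscover {V : Type} [Fintype V] (Γ : SimpleGraph V)
    (G N : Subgroup (Equiv.Perm V)) (hGA : G ≤ aut Γ)
    (hconn : Γ.Connected) (htetra : ∀ u : V, deg Γ u = 4)
    (hHAT : IsHAT Γ G) (hN : NormalIn N G)
    (hNsolv : IsSolvable ↥N) (hGnonsolv : ¬ IsSolvable ↥G) :
    (∀ A, deg (quotGraph Γ N) A = 4) ∧ Semiregular N := by
  classical
  obtain ⟨hVT, hET, hnAT⟩ := hHAT
  obtain ⟨hNG, hNnorm⟩ := hN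
  haveI hneV : Nonempty V := hconn.nonempty
  obtain ⟨v0⟩ := id hneV
  have hadj_of_mem : ∀ {g : Equiv.Perm V}, g ∈ G → ∀ {x y : V}, Γ.Adj x y → Γ.Adj (g x) (g y) := by
    intro g hg x y hxy
    exact (hGA hg x y).mpr hxy
  have hw0ex : (Γ.neighborSet v0).Nonempty :=
    Set.nonempty_of_ncard_ne_zero (by rw [show (Γ.neighborSet v0).ncard = 4 from htetra v0]; norm_num)
  obtain ⟨w0, hvw0⟩ := hw0ex
  have hvw0' : Γ.Adj v0 w0 := hvw0
  -- the orientation relation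
  let D : V → V → Prop := fun x y => ∃ g ∈ G, g v0 = x ∧ g w0 = y
  have hDadj : ∀ {x y}, D x y → Γ.Adj x y := by
    rintro x y ⟨g, hg, rfl, rfl⟩
    exact hadj_of_mem hg hvw0'
  have hDmap : ∀ {g}, g ∈ G → ∀ {x y}, D x y → D (g x) (g y) := by
    rintro g hg x y ⟨k, hk, rfl, rfl⟩
    exact ⟨g * k, G.mul_mem hg hk, rfl, rfl⟩
  have hDrel : ∀ {x y x' y'}, D x y → D x' y' → ∃ g ∈ G, g x = x' ∧ g y = y' := by
    rintro x y x' y' ⟨g, hg, rfl, rfl⟩ ⟨g', hg', rfl, rfl⟩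
    exact ⟨g' * g⁻¹, G.mul_mem hg' (G.inv_mem hg),
      by simp [Equiv.Perm.mul_apply], by simp [Equiv.Perm.mul_apply]⟩
  have hD1 : ∀ {u w}, Γ.Adj u w → D u w ∨ D w u := by
    intro u w huw
    obtain ⟨g, hg, hc⟩ := hET hvw0' huw
    rcases hc with ⟨h1, h2⟩ | ⟨h1, h2⟩
    · exact Or.inl ⟨g, hg, h1, h2⟩
    · exact Or.inr ⟨g, hg, h1, h2⟩
  have hD2 : ∀ {u w}, D u w → D w u → False := by
    intro u w huw hwu
    apply hnAT
    intro p q x y hpq hxy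
    rcases hD1 hpq with hpq' | hpq' <;> rcases hD1 hxy with hxy' | hxy'
    · exact hDrel hpq' hxy'
    · obtain ⟨α, hα, hα1, hα2⟩ := hDrel hpq' huw
      obtain ⟨β, hβ, hβ1, hβ2⟩ := hDrel hwu hxy'
      refine ⟨β * α, G.mul_mem hβ hα, ?_, ?_⟩
      · rw [Equiv.Perm.mul_apply, hα1, hβ2]
      · rw [Equiv.Perm.mul_apply, hα2, hβ1]
    · obtain ⟨γ, hγ, hγ1, hγ2⟩ := hDrel hpq' huw
      obtain ⟨δ, hδ, hδ1, hδ2⟩ := hDrel hwu hxy'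
      refine ⟨δ * γ, G.mul_mem hδ hγ, ?_, ?_⟩
      · rw [Equiv.Perm.mul_apply, hγ2, hδ1]
      · rw [Equiv.Perm.mul_apply, hγ1, hδ2]
    · obtain ⟨ε, hε, hε1, hε2⟩ := hDrel hpq' hxy'
      exact ⟨ε, hε, hε2, hε1⟩
  -- out- and in-neighbour sets
  let outF : V → Finset V := fun v => Finset.univ.filter (fun u => D v u)
  let inF : V → Finset V := fun v => Finset.univ.filter (fun u => D u v)
  have hmemout : ∀ v u, u ∈ outF v ↔ D v u := by
    intro v u
    show u ∈ Finset.univ.filter (fun u => D v u) ↔ D v u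
    simp only [Finset.mem_filter, Finset.mem_univ, true_and]
  have hmemin : ∀ v u, u ∈ inF v ↔ D u v := by
    intro v u
    show u ∈ Finset.univ.filter (fun u => D u v) ↔ D u v
    simp only [Finset.mem_filter, Finset.mem_univ, true_and]
  have houtconst : ∀ v w, (outF v).card = (outF w).card := by
    intro v w
    obtain ⟨g, hg, hgv⟩ := hVT v w
    refine filter_card_perm g _ _ ?_
    intro u
    constructor
    · intro hDu
      rw [← hgv]
      exact hDmap hg hDu
    · intro hDu
      have h2 := hDmap (G.inv_mem hg) hDu
      rw [show g⁻¹ w = v by rw [← hgv]; exact Equiv.Perm.inv_apply_self g v] at h2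
      rwa [show g⁻¹ (g u) = u from Equiv.Perm.inv_apply_self g u] at h2
  have hinconst : ∀ v w, (inF v).card = (inF w).card := by
    intro v w
    obtain ⟨g, hg, hgv⟩ := hVT v w
    refine filter_card_perm g _ _ ?_
    intro u
    constructor
    · intro hDu
      rw [← hgv]
      exact hDmap hg hDu
    · intro hDu
      have h2 := hDmap (G.inv_mem hg) hDu
      rw [show g⁻¹ w = v by rw [← hgv]; exact Equiv.Perm.inv_apply_self g v] at h2
      rwa [show g⁻¹ (g u) = u from Equiv.Perm.inv_apply_self g u] at h2
  have hnbrF : ∀ v, Finset.univ.filter (fun u => Γ.Adj v u) = outF v ∪ inF v := by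
    intro v
    ext u
    simp only [Finset.mem_union, Finset.mem_filter, Finset.mem_univ, true_and, hmemout, hmemin]
    constructor
    · exact hD1
    · rintro (h | h)
      exacts [hDadj h, (hDadj h).symm]
  have hdisjOI : ∀ v, Disjoint (outF v) (inF v) := by
    intro v
    rw [Finset.disjoint_left]
    intro u hu hu'
    exact hD2 ((hmemout v u).mp hu) ((hmemin v u).mp hu')
  have hcard4 : ∀ v, (outF v).card + (inF v).card = 4 := by
    intro v
    rw [← Finset.card_union_of_disjoint (hdisjOI v), ← hnbrF v, ← deg_eq_filter Γ v, htetra v]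
  have hout2 : ∀ v, (outF v).card = 2 := by
    intro v
    have h1 : (outF v).card = (inF v).card :=
      const_eq_of_sum_eq houtconst hinconst (sum_filter_swap D) v
    have h2 := hcard4 v
    omega
  have hin2 : ∀ v, (inF v).card = 2 := by
    intro v
    have h1 := hcard4 v
    have h2 := hout2 v
    omega
  -- stabilizer elements have 2-power order
  have hfix2set : ∀ (g : Equiv.Perm V) (s : Finset V), s.card ≤ 2 → (∀ x ∈ s, g x ∈ s) →
      Odd (orderOf g) → ∀ x ∈ s, g x = x := by
    intro g s hcard hinv hodd x hx
    by_contra hne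
    have hgx : g x ∈ s := hinv x hx
    have hxgx : ({x, g x} : Finset V) ⊆ s := by
      intro y hy
      rcases Finset.mem_insert.mp hy with rfl | hy
      · exact hx
      · rwa [Finset.mem_singleton.mp hy]
    have hcard2 : ({x, g x} : Finset V).card = 2 :=
      Finset.card_pair (fun h => hne h.symm)
    have hseq : ({x, g x} : Finset V) = s :=
      Finset.eq_of_subset_of_card_le hxgx (by rw [hcard2]; exact hcard)
    have hggx : g (g x) = x := by
      have h1 : g (g x) ∈ s := hinv _ hgx
      rw [← hseq] at h1
      rcases Finset.mem_insert.mp h1 with h | h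
      · exact h
      · exact absurd (g.injective (Finset.mem_singleton.mp h)) (fun h' => hne h')
    have hev2 : ∀ m : ℕ, (g ^ (2 * m)) (g x) = g x := by
      intro m
      induction m with
      | zero => rfl
      | succ m ih =>
        have h2 : 2 * (m + 1) = 2 * m + 1 + 1 := by ring
        rw [h2, pow_succ, pow_succ, Equiv.Perm.mul_apply, Equiv.Perm.mul_apply,
          congrArg g hggx, ih]
    obtain ⟨m, hm⟩ := hodd
    have h1 : (g ^ (2 * m + 1)) x = x := by
      rw [← hm, pow_orderOf_eq_one g, Equiv.Perm.one_apply]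
    rw [pow_succ, Equiv.Perm.mul_apply, hev2 m] at h1
    exact hne h1
  have hoddfix : ∀ g ∈ G, Odd (orderOf g) → ∀ v, g v = v → g = 1 := by
    intro g hg hodd v hv
    have hstep : ∀ x, g x = x → ∀ u, Γ.Adj x u → g u = u := by
      intro x hx u hu
      rcases hD1 hu with hDu | hDu
      · refine hfix2set g (outF x) (le_of_eq (hout2 x)) ?_ hodd u ((hmemout x u).mpr hDu)
        intro w hw
        rw [hmemout] at hw ⊢
        have h2 := hDmap hg hw
        rwa [hx] at h2
      · refine hfix2set g (inF x) (le_of_eq (hin2 x)) ?_ hodd u ((hmemin x u).mpr hDu)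
        intro w hw
        rw [hmemin] at hw ⊢
        have h2 := hDmap hg hw
        rwa [hx] at h2
    have haux : ∀ a b : V, Γ.Walk a b → g a = a → g b = b := by
      intro a b p
      induction p with
      | nil => exact id
      | cons h q ih => exact fun ha => ih (hstep _ ha _ h)
    apply Equiv.ext
    intro y
    obtain ⟨p⟩ := hconn.preconnected v y
    rw [Equiv.Perm.one_apply]
    exact haux v y p hv
  have hP3 : ∀ g ∈ G, ∀ v, g v = v → ∃ j : ℕ, g ^ (2 ^ j) = 1 := by
    intro g hg v hv
    refine ⟨(orderOf g).factorization 2, ?_⟩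
    have hfixpow : ∀ m : ℕ, (g ^ m) v = v := by
      intro m
      induction m with
      | zero => rfl
      | succ m ih => rw [pow_succ, Equiv.Perm.mul_apply, hv, ih]
    have hnpos : 0 < orderOf g := orderOf_pos g
    have hdvd : 2 ^ (orderOf g).factorization 2 ∣ orderOf g := Nat.ordProj_dvd _ 2
    have hord : orderOf (g ^ (2 ^ (orderOf g).factorization 2))
        = orderOf g / 2 ^ (orderOf g).factorization 2 := by
      rw [orderOf_pow, Nat.gcd_eq_right hdvd]
    have hodd : Odd (orderOf (g ^ (2 ^ (orderOf g).factorization 2))) := by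
      rw [hord]
      have h2 : ¬ 2 ∣ orderOf g / 2 ^ (orderOf g).factorization 2 :=
        Nat.not_dvd_ordCompl Nat.prime_two hnpos.ne'
      rcases Nat.even_or_odd (orderOf g / 2 ^ (orderOf g).factorization 2) with he | ho
      · exact absurd he.two_dvd h2
      · exact ho
    exact hoddfix _ (G.pow_mem hg _) hodd v (hfixpow _)
  -- ### the quotient set and the action of G on it
  let mkq : V → Quotient (MulAction.orbitRel ↥N V) := Quotient.mk (MulAction.orbitRel ↥N V)
  have hmk_eq : ∀ {x y : V}, (∃ n ∈ N, n y = x) → mkq x = mkq y := by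
    rintro x y ⟨n, hn, rfl⟩
    exact Quotient.sound ⟨⟨n, hn⟩, rfl⟩
  have hmk_rev : ∀ {x y : V}, mkq x = mkq y → ∃ n ∈ N, n y = x := by
    intro x y h
    obtain ⟨⟨n, hn⟩, hn2⟩ := Quotient.exact h
    exact ⟨n, hn, hn2⟩
  have hwd : ∀ (g : Equiv.Perm V), g ∈ G → ∀ x y : V,
      (MulAction.orbitRel ↥N V) x y → mkq (g x) = mkq (g y) := by
    intro g hg x y hxy
    obtain ⟨⟨n, hn⟩, hn2⟩ := hxy
    apply hmk_eq
    refine ⟨g * n * g⁻¹, hNnorm g hg n hn, ?_⟩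
    simp only [Equiv.Perm.mul_apply, Equiv.Perm.inv_apply_self]
    rw [show n y = x from hn2]
  let φfun : ↥G → Quotient (MulAction.orbitRel ↥N V) → Quotient (MulAction.orbitRel ↥N V) :=
    fun g => Quotient.lift (fun x => mkq ((g : Equiv.Perm V) x))
      (fun x y h => hwd g g.2 x y h)
  have hφfun_mk : ∀ (g : ↥G) (x : V), φfun g (mkq x) = mkq ((g : Equiv.Perm V) x) :=
    fun g x => rfl
  have hφinvfun : ∀ (g : ↥G) (A : Quotient (MulAction.orbitRel ↥N V)),
      φfun g⁻¹ (φfun g A) = A := by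
    intro g A
    induction A using Quotient.ind
    next x =>
    show φfun g⁻¹ (φfun g (mkq x)) = mkq x
    rw [hφfun_mk, hφfun_mk]
    congr 1
    exact Equiv.Perm.inv_apply_self (g : Equiv.Perm V) x
  let φ : ↥G →* Equiv.Perm (Quotient (MulAction.orbitRel ↥N V)) := MonoidHom.mk'
    (fun g => ⟨φfun g, φfun g⁻¹, hφinvfun g,
      fun A => by have h1 := hφinvfun g⁻¹ A; rwa [inv_inv] at h1⟩)
    (by
      intro a b
      apply Equiv.ext
      refine Quotient.ind (fun x => ?_)
      rfl)
  have hφmk : ∀ (g : ↥G) (x : V), φ g (mkq x) = mkq ((g : Equiv.Perm V) x) := fun g x => rfl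
  have hφcancel : ∀ (g : ↥G) A, φ g⁻¹ (φ g A) = A := fun g A => hφinvfun g A
  have hΩtrans : ∀ A B : Quotient (MulAction.orbitRel ↥N V), ∃ g : ↥G, φ g A = B := by
    intro A B
    obtain ⟨u, rfl⟩ := Quotient.exists_rep A
    obtain ⟨v, rfl⟩ := Quotient.exists_rep B
    obtain ⟨g, hg, hgu⟩ := hVT u v
    exact ⟨⟨g, hg⟩, by rw [show Quotient.mk _ u = mkq u from rfl, hφmk]; exact congrArg mkq hgu⟩
  -- the quotient graph
  set Δ : SimpleGraph (Quotient (MulAction.orbitRel ↥N V)) := quotGraph Γ N with hΔdef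
  have hΔadj : ∀ A B, Δ.Adj A B ↔ (A ≠ B ∧ ∃ u v : V, Γ.Adj u v ∧ mkq u = A ∧ mkq v = B) :=
    fun A B => Iff.rfl
  have hφaut : ∀ (g : ↥G) A B, Δ.Adj A B → Δ.Adj (φ g A) (φ g B) := by
    rintro g A B ⟨hne, u, v, huv, hu, hv⟩
    refine ⟨fun hc => hne ((φ g).injective hc), (g : Equiv.Perm V) u, (g : Equiv.Perm V) v,
      hadj_of_mem g.2 huv, ?_, ?_⟩
    · rw [← hu, hφmk]
    · rw [← hv, hφmk]
  have hφautiff : ∀ (g : ↥G) A B, Δ.Adj (φ g A) (φ g B) ↔ Δ.Adj A B := by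
    intro g A B
    refine ⟨fun h => ?_, hφaut g A B⟩
    have h2 := hφaut g⁻¹ _ _ h
    rwa [hφcancel, hφcancel] at h2
  have hφrange_aut : φ.range ≤ aut Δ := by
    rintro - ⟨g, rfl⟩
    intro A B
    exact hφautiff g A B
  -- the out-relation on the quotient
  let OutR : Quotient (MulAction.orbitRel ↥N V) → Quotient (MulAction.orbitRel ↥N V) → Prop :=
    fun A B => ∃ u w : V, D u w ∧ mkq u = A ∧ mkq w = B
  have hOmap : ∀ (g : ↥G) {A B}, OutR A B → OutR (φ g A) (φ g B) := by
    rintro g A B ⟨u, w, hDuw, rfl, rfl⟩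
    exact ⟨(g : Equiv.Perm V) u, (g : Equiv.Perm V) w, hDmap g.2 hDuw, rfl, rfl⟩
  have hOiff : ∀ (g : ↥G) A B, OutR (φ g A) (φ g B) ↔ OutR A B := by
    intro g A B
    refine ⟨fun h => ?_, hOmap g⟩
    have h2 := hOmap g⁻¹ h
    rwa [hφcancel, hφcancel] at h2
  have hOpull : ∀ (v : V) (B), OutR (mkq v) B ↔ ∃ w, D v w ∧ mkq w = B := by
    intro v B
    constructor
    · rintro ⟨u, w, hDuw, hu, rfl⟩
      obtain ⟨n, hn, hnv⟩ := hmk_rev hu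
      refine ⟨n⁻¹ w, ?_, ?_⟩
      · have h2 := hDmap (G.inv_mem (hNG hn)) hDuw
        rwa [show n⁻¹ u = v by rw [← hnv]; exact Equiv.Perm.inv_apply_self n v] at h2
      · exact hmk_eq ⟨n⁻¹, N.inv_mem hn, rfl⟩
    · rintro ⟨w, hDvw, rfl⟩
      exact ⟨v, w, hDvw, rfl, rfl⟩
  -- counting on the quotient
  haveI hΩfin : Fintype (Quotient (MulAction.orbitRel ↥N V)) := Fintype.ofFinite _
  haveI hΩne : Nonempty (Quotient (MulAction.orbitRel ↥N V)) := ⟨mkq v0⟩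
  let r' : Quotient (MulAction.orbitRel ↥N V) → Quotient (MulAction.orbitRel ↥N V) → Prop :=
    fun A B => A ≠ B ∧ OutR A B
  let cO : Quotient (MulAction.orbitRel ↥N V) → ℕ :=
    fun A => (Finset.univ.filter (fun B => r' A B)).card
  let cI : Quotient (MulAction.orbitRel ↥N V) → ℕ :=
    fun A => (Finset.univ.filter (fun B => r' B A)).card
  have hcOconst : ∀ A B, cO A = cO B := by
    intro A B
    obtain ⟨g, hg⟩ := hΩtrans A B
    refine filter_card_perm (φ g) _ _ ?_
    intro C
    constructor
    · rintro ⟨h1, h2⟩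
      refine ⟨?_, ?_⟩
      · rw [← hg]
        exact fun hc => h1 ((φ g).injective hc)
      · rw [← hg]
        exact hOmap g h2
    · rintro ⟨h1, h2⟩
      rw [← hg] at h1 h2
      exact ⟨fun hc => h1 (by rw [hc]), (hOiff g A C).mp h2⟩
  have hcIconst : ∀ A B, cI A = cI B := by
    intro A B
    obtain ⟨g, hg⟩ := hΩtrans A B
    refine filter_card_perm (φ g) _ _ ?_
    intro C
    constructor
    · rintro ⟨h1, h2⟩
      refine ⟨?_, ?_⟩
      · rw [← hg]
        exact fun hc => h1 ((φ g).injective hc)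
      · rw [← hg]
        exact hOmap g h2
    · rintro ⟨h1, h2⟩
      rw [← hg] at h1 h2
      exact ⟨fun hc => h1 (by rw [hc]), (hOiff g C A).mp h2⟩
  have hcOI : ∀ A, cO A = cI A :=
    fun A => const_eq_of_sum_eq hcOconst hcIconst (sum_filter_swap r') A
  have hsubO : ∀ v : V, Finset.univ.filter (fun B => r' (mkq v) B) ⊆ (outF v).image mkq := by
    intro v B hB
    have hB2 : r' (mkq v) B := by
      have := Finset.mem_filter.mp hB
      exact this.2
    obtain ⟨w, hDw, hw⟩ := (hOpull v B).mp hB2.2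
    exact Finset.mem_image.mpr ⟨w, (hmemout v w).mpr hDw, hw⟩
  have hcO2 : ∀ A, cO A ≤ 2 := by
    intro A
    obtain ⟨v, rfl⟩ := Quotient.exists_rep A
    calc cO (mkq v) ≤ ((outF v).image mkq).card := Finset.card_le_card (hsubO v)
      _ ≤ (outF v).card := Finset.card_image_le
      _ = 2 := hout2 v
  have hdegq_filter : ∀ A, deg Δ A = (Finset.univ.filter (fun B => Δ.Adj A B)).card :=
    fun A => deg_eq_filter Δ A
  have hdegqconst : ∀ A B, deg Δ A = deg Δ B := by
    intro A B
    obtain ⟨g, hg⟩ := hΩtrans A B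
    rw [hdegq_filter A, hdegq_filter B]
    refine filter_card_perm (φ g) _ _ ?_
    intro C
    rw [← hg]
    exact (hφautiff g A C).symm
  have hsplitq : ∀ {A B}, Δ.Adj A B → A ≠ B ∧ (OutR A B ∨ OutR B A) := by
    rintro A B ⟨hne, u, v, huv, hu, hv⟩
    refine ⟨hne, ?_⟩
    rcases hD1 huv with h | h
    · exact Or.inl ⟨u, v, h, hu, hv⟩
    · exact Or.inr ⟨v, u, h, hv, hu⟩
  have hadj_of_O : ∀ {A B}, OutR A B → A ≠ B → Δ.Adj A B := by
    rintro A B ⟨u, w, hDuw, hu, hw⟩ hne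
    exact ⟨hne, u, w, hDadj hDuw, hu, hw⟩
  -- ### if the quotient has degree ≤ 2 everywhere, G would be solvable
  have hsmall_contra : (∀ A, deg Δ A ≤ 2) → False := by
    intro hsmallq
    have hΔreach : ∀ u v : V, Δ.Reachable (mkq u) (mkq v) := by
      intro u v
      obtain ⟨p⟩ := hconn.preconnected u v
      induction p with
      | nil => exact SimpleGraph.Reachable.refl _
      | @cons a c b h q ih =>
        refine SimpleGraph.Reachable.trans ?_ ih
        by_cases heq : mkq a = mkq c
        · rw [heq]
        · exact SimpleGraph.Adj.reachable ⟨heq, a, c, h, rfl, rfl⟩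
    have hΔconn : Δ.Connected := by
      rw [SimpleGraph.connected_iff]
      refine ⟨?_, ⟨mkq v0⟩⟩
      intro A B
      obtain ⟨u, rfl⟩ := Quotient.exists_rep A
      obtain ⟨v, rfl⟩ := Quotient.exists_rep B
      exact hΔreach u v
    haveI hHsolv : Group.IsSolvable ↥φ.range :=
      aut_solvable_of_deg_le_two Δ hΔconn hsmallq φ.range hφrange_aut
    -- the kernel of the action on the quotient
    have hN1K : N.subgroupOf G ≤ φ.ker := by
      intro n hn
      rw [MonoidHom.mem_ker]
      apply Equiv.ext
      intro A
      obtain ⟨x, rfl⟩ := Quotient.exists_rep A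
      rw [show Quotient.mk _ x = mkq x from rfl, hφmk, Equiv.Perm.one_apply]
      exact hmk_eq ⟨(n : Equiv.Perm V), Subgroup.mem_subgroupOf.mp hn, rfl⟩
    haveI hN2norm : ((N.subgroupOf G).subgroupOf φ.ker).Normal := by
      constructor
      intro n hn k
      rw [Subgroup.mem_subgroupOf] at hn ⊢
      rw [Subgroup.mem_subgroupOf] at hn ⊢
      simp only [Subgroup.coe_mul, Subgroup.coe_inv]
      exact hNnorm _ (k : ↥G).2 _ hn
    haveI hN2solv : Group.IsSolvable ↥((N.subgroupOf G).subgroupOf φ.ker) := by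
      haveI : Group.IsSolvable ↥N := hNsolv
      have hval : ∀ n : ↥((N.subgroupOf G).subgroupOf φ.ker),
          (((n : ↥φ.ker) : ↥G) : Equiv.Perm V) ∈ N := by
        intro n
        have h1 := n.2
        rw [Subgroup.mem_subgroupOf] at h1
        rw [Subgroup.mem_subgroupOf] at h1
        exact h1
      refine solvable_of_solvable_injective
        (f := { toFun := fun n => (⟨(((n : ↥φ.ker) : ↥G) : Equiv.Perm V), hval n⟩ : ↥N)
                map_one' := rfl
                map_mul' := fun a b => rfl }) ?_
      intro a b hab
      have h1 := congrArg Subtype.val hab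
      exact Subtype.ext (Subtype.ext (Subtype.ext h1))
    -- the quotient of the kernel is a 2-group
    have hQ2 : ∀ q : ↥φ.ker ⧸ ((N.subgroupOf G).subgroupOf φ.ker),
        ∃ j : ℕ, q ^ (2 ^ j) = 1 := by
      intro q
      induction q using QuotientGroup.induction_on with
      | H k =>
        have hker : φ (k : ↥G) = 1 := k.2
        have h0 : mkq (((k : ↥G) : Equiv.Perm V) v0) = mkq v0 := by
          have h1 := congrArg (fun e : Equiv.Perm (Quotient (MulAction.orbitRel ↥N V)) =>
            e (mkq v0)) hker
          exact h1
        obtain ⟨n, hn, hnk⟩ := hmk_rev h0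
        have hmG : (n⁻¹ : Equiv.Perm V) ∈ G := G.inv_mem (hNG hn)
        have hnN1 : (⟨n⁻¹, hmG⟩ : ↥G) ∈ N.subgroupOf G := by
          rw [Subgroup.mem_subgroupOf]
          exact N.inv_mem hn
        have hmfix : (((⟨n⁻¹, hmG⟩ : ↥G) * (k : ↥G) : ↥G) : Equiv.Perm V) v0 = v0 := by
          show (n⁻¹ * ((k : ↥G) : Equiv.Perm V)) v0 = v0
          rw [Equiv.Perm.mul_apply, ← hnk]
          exact Equiv.Perm.inv_apply_self n v0
        obtain ⟨j, hj⟩ := hP3 _ ((⟨n⁻¹, hmG⟩ : ↥G) * (k : ↥G)).2 v0 hmfix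
        refine ⟨j, ?_⟩
        have hmK : (⟨n⁻¹, hmG⟩ : ↥G) * (k : ↥G) ∈ φ.ker :=
          φ.ker.mul_mem (hN1K hnN1) k.2
        have hnK : (⟨n⁻¹, hmG⟩ : ↥G) ∈ φ.ker := hN1K hnN1
        have hfact : (⟨(⟨n⁻¹, hmG⟩ : ↥G) * (k : ↥G), hmK⟩ : ↥φ.ker)
            = ⟨(⟨n⁻¹, hmG⟩ : ↥G), hnK⟩ * k := rfl
        have hmksame : (QuotientGroup.mk' ((N.subgroupOf G).subgroupOf φ.ker))
            (⟨(⟨n⁻¹, hmG⟩ : ↥G) * (k : ↥G), hmK⟩ : ↥φ.ker)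
            = (QuotientGroup.mk' ((N.subgroupOf G).subgroupOf φ.ker)) k := by
          rw [hfact, map_mul]
          have h1 : (QuotientGroup.mk' ((N.subgroupOf G).subgroupOf φ.ker))
              (⟨(⟨n⁻¹, hmG⟩ : ↥G), hnK⟩ : ↥φ.ker) = 1 := by
            rw [QuotientGroup.mk'_apply, QuotientGroup.eq_one_iff]
            rw [Subgroup.mem_subgroupOf]
            exact hnN1
          rw [h1, one_mul]
        have hpowK : (⟨(⟨n⁻¹, hmG⟩ : ↥G) * (k : ↥G), hmK⟩ : ↥φ.ker) ^ (2 ^ j) = 1 := by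
          apply Subtype.ext
          apply Subtype.ext
          rw [show ((((⟨(⟨n⁻¹, hmG⟩ : ↥G) * (k : ↥G), hmK⟩ : ↥φ.ker) ^ (2 ^ j) : ↥φ.ker) : ↥G)
            : Equiv.Perm V) = (n⁻¹ * ((k : ↥G) : Equiv.Perm V)) ^ (2 ^ j) from rfl]
          exact hj
        calc ((k : ↥φ.ker ⧸ ((N.subgroupOf G).subgroupOf φ.ker))) ^ (2 ^ j)
            = ((QuotientGroup.mk' ((N.subgroupOf G).subgroupOf φ.ker)) k) ^ (2 ^ j) := rfl
          _ = ((QuotientGroup.mk' ((N.subgroupOf G).subgroupOf φ.ker))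
              (⟨(⟨n⁻¹, hmG⟩ : ↥G) * (k : ↥G), hmK⟩ : ↥φ.ker)) ^ (2 ^ j) := by rw [hmksame]
          _ = (QuotientGroup.mk' ((N.subgroupOf G).subgroupOf φ.ker))
              ((⟨(⟨n⁻¹, hmG⟩ : ↥G) * (k : ↥G), hmK⟩ : ↥φ.ker) ^ (2 ^ j)) := (map_pow _ _ _).symm
          _ = 1 := by rw [hpowK, map_one]
    haveI : Fact (Nat.Prime 2) := ⟨Nat.prime_two⟩
    have hpg : IsPGroup 2 (↥φ.ker ⧸ ((N.subgroupOf G).subgroupOf φ.ker)) := fun q => hQ2 q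
    haveI := hpg.isNilpotent
    haveI hQsolv : Group.IsSolvable (↥φ.ker ⧸ ((N.subgroupOf G).subgroupOf φ.ker)) := inferInstance
    haveI hKsolv : Group.IsSolvable ↥φ.ker :=
      solvable_of_ker_le_range ((N.subgroupOf G).subgroupOf φ.ker).subtype
        (QuotientGroup.mk' ((N.subgroupOf G).subgroupOf φ.ker))
        (by rw [QuotientGroup.ker_mk', Subgroup.range_subtype])
    have hGsolv : IsSolvable ↥G :=
      solvable_of_ker_le_range φ.ker.subtype φ.rangeRestrict
        (by rw [MonoidHom.ker_rangeRestrict, Subgroup.range_subtype])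
    exact hGnonsolv hGsolv
  -- ### the Bi dichotomy
  let Bi : Quotient (MulAction.orbitRel ↥N V) → Quotient (MulAction.orbitRel ↥N V) → Prop :=
    fun A B => OutR A B ∧ OutR B A
  have hBitrans : ∀ {A B A' B'}, Δ.Adj A B → Δ.Adj A' B' → Bi A B → Bi A' B' := by
    rintro A B A' B' hAB hA'B' ⟨hOAB, hOBA⟩
    obtain ⟨p, q, hDpq, hp, hq⟩ := hOAB
    obtain ⟨hne', u', v', hu'v', hu', hv'⟩ := hA'B'
    rcases hD1 hu'v' with hDu | hDu
    · obtain ⟨g, hg, h1, h2⟩ := hDrel hDpq hDu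
      have hgA : φ ⟨g, hg⟩ A = A' := by rw [← hp, hφmk]; show mkq (g p) = A'; rw [h1]; exact hu'
      have hgB : φ ⟨g, hg⟩ B = B' := by rw [← hq, hφmk]; show mkq (g q) = B'; rw [h2]; exact hv'
      constructor
      · rw [← hgA, ← hgB]; exact hOmap _ ⟨p, q, hDpq, hp, hq⟩
      · rw [← hgA, ← hgB]; exact hOmap _ hOBA
    · obtain ⟨g, hg, h1, h2⟩ := hDrel hDpq hDu
      have hgA : φ ⟨g, hg⟩ A = B' := by rw [← hp, hφmk]; show mkq (g p) = B'; rw [h1]; exact hv'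
      have hgB : φ ⟨g, hg⟩ B = A' := by rw [← hq, hφmk]; show mkq (g q) = A'; rw [h2]; exact hu'
      constructor
      · rw [← hgA, ← hgB]; exact hOmap _ hOBA
      · rw [← hgA, ← hgB]; exact hOmap _ ⟨p, q, hDpq, hp, hq⟩
  by_cases hBiAll : ∀ A B, Δ.Adj A B → Bi A B
  · exfalso
    apply hsmall_contra
    intro A
    have hsub : Finset.univ.filter (fun B => Δ.Adj A B)
        ⊆ Finset.univ.filter (fun B => r' A B) := by
      intro B hB
      have hB2 : Δ.Adj A B := (Finset.mem_filter.mp hB).2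
      obtain ⟨hne, hor⟩ := hsplitq hB2
      refine Finset.mem_filter.mpr ⟨Finset.mem_univ _, hne, ?_⟩
      rcases hor with h | h
      · exact h
      · exact (hBiAll A B hB2).1
    calc deg Δ A = (Finset.univ.filter (fun B => Δ.Adj A B)).card := hdegq_filter A
      _ ≤ cO A := Finset.card_le_card hsub
      _ ≤ 2 := hcO2 A
  · push_neg at hBiAll
    obtain ⟨A₁, B₁, hadj₁, hnbi₁⟩ := hBiAll
    have hnBi : ∀ A B, Δ.Adj A B → ¬ Bi A B :=
      fun A B hAB hbi => hnbi₁ (hBitrans hAB hadj₁ hbi)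
    have hdisjq : ∀ A, Disjoint (Finset.univ.filter (fun B => r' A B))
        (Finset.univ.filter (fun B => r' B A)) := by
      intro A
      rw [Finset.disjoint_left]
      intro B h1 h2
      have h1' : r' A B := (Finset.mem_filter.mp h1).2
      have h2' : r' B A := (Finset.mem_filter.mp h2).2
      exact hnBi A B (hadj_of_O h1'.2 h1'.1) ⟨h1'.2, h2'.2⟩
    have hunion : ∀ A, Finset.univ.filter (fun B => Δ.Adj A B)
        = Finset.univ.filter (fun B => r' A B) ∪ Finset.univ.filter (fun B => r' B A) := by
      intro A
      ext B
      simp only [Finset.mem_union, Finset.mem_filter, Finset.mem_univ, true_and]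
      constructor
      · intro hAB
        obtain ⟨hne, hor⟩ := hsplitq hAB
        rcases hor with h | h
        · exact Or.inl ⟨hne, h⟩
        · exact Or.inr ⟨hne.symm, h⟩
      · rintro (⟨hne, h⟩ | ⟨hne, h⟩)
        · exact hadj_of_O h hne
        · exact (hadj_of_O h hne).symm
    have hdegq_split : ∀ A, deg Δ A = cO A + cI A := by
      intro A
      rw [hdegq_filter A, hunion A, Finset.card_union_of_disjoint (hdisjq A)]
    by_cases hbig : cO (mkq v0) = 2
    case neg =>
      exfalso
      apply hsmall_contra
      intro A
      rw [hdegq_split A, ← hcOI A]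
      have h1 : cO A = cO (mkq v0) := hcOconst _ _
      have h2 := hcO2 (mkq v0)
      omega
    case pos =>
    have hcOall : ∀ A, cO A = 2 := fun A => (hcOconst A (mkq v0)).trans hbig
    have hcIall : ∀ A, cI A = 2 := by
      intro A
      rw [← hcOI A]
      exact hcOall A
    -- uniqueness of the neighbour in each orbit
    have huniq : ∀ v u u' : V, Γ.Adj v u → Γ.Adj v u' → mkq u = mkq u' → u = u' := by
      intro v u u' hu hu' hmk
      obtain ⟨a, b, hab, houtv⟩ := Finset.card_eq_two.mp (hout2 v)
      obtain ⟨c, d, hcd, hinv⟩ := Finset.card_eq_two.mp (hin2 v)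
      -- the filter of out-classes equals the image
      have himout : (outF v).image mkq = Finset.univ.filter (fun B => r' (mkq v) B) := by
        refine (Finset.eq_of_subset_of_card_le (hsubO v) ?_).symm
        calc ((outF v).image mkq).card ≤ (outF v).card := Finset.card_image_le
          _ = 2 := hout2 v
          _ = cO (mkq v) := (hcOall (mkq v)).symm
      have hsubI : Finset.univ.filter (fun B => r' B (mkq v)) ⊆ (inF v).image mkq := by
        intro B hB
        have hB2 : r' B (mkq v) := (Finset.mem_filter.mp hB).2
        obtain ⟨p, w, hDpw, hp, hw⟩ := hB2.2
        obtain ⟨n, hn, hnv⟩ := hmk_rev hw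
        refine Finset.mem_image.mpr ⟨n⁻¹ p, ?_, ?_⟩
        · rw [hmemin]
          have h2 := hDmap (G.inv_mem (hNG hn)) hDpw
          rwa [show n⁻¹ w = v by rw [← hnv]; exact Equiv.Perm.inv_apply_self n v] at h2
        · rw [← hp]
          exact hmk_eq ⟨n⁻¹, N.inv_mem hn, rfl⟩
      have himin : (inF v).image mkq = Finset.univ.filter (fun B => r' B (mkq v)) := by
        refine (Finset.eq_of_subset_of_card_le hsubI ?_).symm
        calc ((inF v).image mkq).card ≤ (inF v).card := Finset.card_image_le
          _ = 2 := hin2 v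
          _ = cI (mkq v) := (hcIall (mkq v)).symm
      have himout2 : ({mkq a, mkq b} : Finset _) = Finset.univ.filter (fun B => r' (mkq v) B) := by
        rw [← himout, houtv]
        simp [Finset.image_insert]
      have himin2 : ({mkq c, mkq d} : Finset _) = Finset.univ.filter (fun B => r' B (mkq v)) := by
        rw [← himin, hinv]
        simp [Finset.image_insert]
      have hcardout : ({mkq a, mkq b} : Finset _).card = 2 := by
        rw [himout2]
        exact hcOall (mkq v)
      have hcardin : ({mkq c, mkq d} : Finset _).card = 2 := by
        rw [himin2]
        exact hcIall (mkq v)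
      have hab2 : mkq a ≠ mkq b := by
        intro h
        rw [h] at hcardout
        simp at hcardout
      have hcd2 : mkq c ≠ mkq d := by
        intro h
        rw [h] at hcardin
        simp at hcardin
      have hmemouta : mkq a ∈ Finset.univ.filter (fun B => r' (mkq v) B) := by
        rw [← himout2]; simp
      have hmemoutb : mkq b ∈ Finset.univ.filter (fun B => r' (mkq v) B) := by
        rw [← himout2]; simp
      have hmeminc : mkq c ∈ Finset.univ.filter (fun B => r' B (mkq v)) := by
        rw [← himin2]; simp
      have hmemind : mkq d ∈ Finset.univ.filter (fun B => r' B (mkq v)) := by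
        rw [← himin2]; simp
      have hac2 : mkq a ≠ mkq c := by
        intro h
        exact (Finset.disjoint_left.mp (hdisjq (mkq v))) hmemouta (h ▸ hmeminc)
      have had2 : mkq a ≠ mkq d := by
        intro h
        exact (Finset.disjoint_left.mp (hdisjq (mkq v))) hmemouta (h ▸ hmemind)
      have hbc2 : mkq b ≠ mkq c := by
        intro h
        exact (Finset.disjoint_left.mp (hdisjq (mkq v))) hmemoutb (h ▸ hmeminc)
      have hbd2 : mkq b ≠ mkq d := by
        intro h
        exact (Finset.disjoint_left.mp (hdisjq (mkq v))) hmemoutb (h ▸ hmemind)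
      have humem : u ∈ outF v ∪ inF v := by
        rw [← hnbrF v]
        simp [hu]
      have humem' : u' ∈ outF v ∪ inF v := by
        rw [← hnbrF v]
        simp [hu']
      rw [houtv, hinv] at humem humem'
      simp only [Finset.mem_union, Finset.mem_insert, Finset.mem_singleton] at humem humem'
      rcases humem with (rfl | rfl) | (rfl | rfl) <;>
        rcases humem' with (rfl | rfl) | (rfl | rfl) <;>
        first
          | rfl
          | exact absurd hmk ‹_›
          | exact absurd hmk.symm ‹_›
    constructor
    · -- the quotient degree is 4
      intro A
      have h1 : deg Δ A = 4 := by
        rw [hdegq_split A, hcOall A, hcIall A]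
      exact h1
    · -- N is semiregular
      intro n hn v hnv
      have hstep2 : ∀ x, n x = x → ∀ u, Γ.Adj x u → n u = u := by
        intro x hx u hu
        refine huniq x (n u) u ?_ hu ?_
        · have h2 := hadj_of_mem (hNG hn) hu
          rwa [hx] at h2
        · exact hmk_eq ⟨n, hn, rfl⟩
      have haux2 : ∀ a b : V, Γ.Walk a b → n a = a → n b = b := by
        intro a b p
        induction p with
        | nil => exact id
        | cons h q ih => exact fun ha => ih (hstep2 _ ha _ h)
      apply Equiv.ext
      intro y
      obtain ⟨p⟩ := hconn.preconnected v y
      rw [Equiv.Perm.one_apply]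
      exact haux2 v y p hnv




end HAT
end

section
/- Let H be a concentric group of order 2^n with n ≥ 2, with generators a_1, …, a_n and isomorphism φ: B = ⟨a_1, …, a_{n-1}⟩ → C = ⟨a_2, …, a_n⟩ satisfying φ(a_i) = a_{i+1}, so that H = B ∪ a_n B. For h ∈ B let τ_h be the permutation of H defined by τ_h(b) = φ(b) and τ_h(a_n b) = a_1 h φ(b) for all b ∈ B. Then for every i = 1, 2, …, n-1, one has τ_h^{-1} ∘ R(a_i) ∘ τ_h = R(a_{i+1}) as permutations of H, where R(g) denotes the permutation x ↦ xg of H. -/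
open Equiv MulAction

namespace HAT

variable {V : Type*}

/-- **Lemma.** Let `H` be a concentric group of order `2^n` (`n ≥ 2`) with generators
`a 0, …, a (n-1)` and rotary isomorphism `φ : B = ⟨a 0, …, a (n-2)⟩ ≃* ⟨a 1, …, a (n-1)⟩`,
`φ (a i) = a (i+1)`.  For `h ∈ B` let `τ` be the permutation of `H` with `τ b = φ b` and
`τ (a (n-1) * b) = a 0 * h * φ b` for `b ∈ B`.  Then conjugation by `τ` carries the
right translation `R (a i) : x ↦ x * a i` to `R (a (i+1))` for `i = 0, …, n-2`
(in Mathlib's composition convention this reads `τ * R (a i) * τ⁻¹ = R (a (i+1))`,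
i.e. applying `τ⁻¹`, then `R (a i)`, then `τ`). -/
theorem lem_R_H_concentric (H : Type) [Group H] [Finite H] (n : ℕ) (hn : 2 ≤ n)
    (hH : Nat.card H = 2 ^ n) (a : Fin n → H)
    (hgen : Subgroup.closure (Set.range a) = ⊤)
    (hcard : ∀ i j : Fin n, i ≤ j →
      Nat.card ↥(Subgroup.closure (a '' Set.Icc i j)) = 2 ^ ((j : ℕ) - (i : ℕ) + 1))
    (φ : ↥(Subgroup.closure (a '' {k : Fin n | (k : ℕ) + 1 < n})) ≃*
         ↥(Subgroup.closure (a '' {k : Fin n | 0 < (k : ℕ)})))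
    (hφ : ∀ (i : Fin n) (hi : (i : ℕ) + 1 < n),
      (φ ⟨a i, Subgroup.subset_closure (Set.mem_image_of_mem a hi)⟩ : H)
        = a ⟨(i : ℕ) + 1, hi⟩)
    (h : H) (hh : h ∈ Subgroup.closure (a '' {k : Fin n | (k : ℕ) + 1 < n}))
    (τ : Equiv.Perm H)
    (hτ1 : ∀ b : ↥(Subgroup.closure (a '' {k : Fin n | (k : ℕ) + 1 < n})),
      τ (b : H) = (φ b : H))
    (hτ2 : ∀ b : ↥(Subgroup.closure (a '' {k : Fin n | (k : ℕ) + 1 < n})),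
      τ (a ⟨n - 1, by omega⟩ * (b : H)) = a ⟨0, by omega⟩ * h * (φ b : H))
    (i : Fin n) (hi : (i : ℕ) + 1 < n) :
    τ * Equiv.mulRight (a i) * τ⁻¹ = Equiv.mulRight (a ⟨(i : ℕ) + 1, hi⟩) := by
  have hsets : {k : Fin n | (k : ℕ) + 1 < n}
      = Set.Icc (⟨0, by omega⟩ : Fin n) ⟨n - 2, by omega⟩ := by
    ext k
    simp only [Set.mem_setOf_eq, Set.mem_Icc, Fin.le_def, Fin.val_mk]
    omega
  have hle : (⟨0, by omega⟩ : Fin n) ≤ ⟨n - 2, by omega⟩ := by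
    simp [Fin.le_def]
  have hcardB : Nat.card ↥(Subgroup.closure (a '' {k : Fin n | (k : ℕ) + 1 < n}))
      = 2 ^ (n - 1) := by
    rw [hsets, hcard _ _ hle]
    simp only [Fin.val_mk]
    congr 1
    omega
  have hidx : (Subgroup.closure (a '' {k : Fin n | (k : ℕ) + 1 < n})).index = 2 := by
    have h0 := Subgroup.card_mul_index (Subgroup.closure (a '' {k : Fin n | (k : ℕ) + 1 < n}))
    rw [hcardB, hH] at h0
    have h2 : (2:ℕ) ^ n = 2 ^ (n-1) * 2 := by
      rw [← pow_succ]; congr 1; omega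
    rw [h2] at h0
    exact Nat.eq_of_mul_eq_mul_left (by positivity : (0:ℕ) < 2 ^ (n-1)) h0
  have han : a ⟨n - 1, by omega⟩ ∉ Subgroup.closure (a '' {k : Fin n | (k : ℕ) + 1 < n}) := by
    intro hmem
    have hle2 : Subgroup.closure (Set.range a)
        ≤ Subgroup.closure (a '' {k : Fin n | (k : ℕ) + 1 < n}) := by
      rw [Subgroup.closure_le]
      rintro x ⟨k, rfl⟩
      by_cases hk : (k : ℕ) + 1 < n
      · exact Subgroup.subset_closure (Set.mem_image_of_mem a hk)
      · have hk' : k = ⟨n - 1, by omega⟩ := by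
          ext; have := k.isLt; simp only [Fin.val_mk]; omega
        rwa [hk']
    rw [hgen] at hle2
    have htop : Subgroup.closure (a '' {k : Fin n | (k : ℕ) + 1 < n}) = ⊤ :=
      top_le_iff.mp hle2
    rw [htop, Subgroup.card_top, hH] at hcardB
    have := Nat.pow_right_injective (le_refl 2) hcardB
    omega
  have hdecomp : ∀ x : H, x ∈ Subgroup.closure (a '' {k : Fin n | (k : ℕ) + 1 < n}) ∨
      ∃ b ∈ Subgroup.closure (a '' {k : Fin n | (k : ℕ) + 1 < n}),
        x = a ⟨n - 1, by omega⟩ * b := by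
    intro x
    by_cases hx : x ∈ Subgroup.closure (a '' {k : Fin n | (k : ℕ) + 1 < n})
    · exact Or.inl hx
    · right
      refine ⟨(a ⟨n - 1, by omega⟩)⁻¹ * x, ?_, by group⟩
      rw [Subgroup.mul_mem_iff_of_index_two hidx]
      simp only [inv_mem_iff]
      tauto
  have hai : a i ∈ Subgroup.closure (a '' {k : Fin n | (k : ℕ) + 1 < n}) :=
    Subgroup.subset_closure (Set.mem_image_of_mem a hi)
  have hφmul : ∀ (b : ↥(Subgroup.closure (a '' {k : Fin n | (k : ℕ) + 1 < n}))),
      (φ (b * ⟨a i, hai⟩) : H) = (φ b : H) * a ⟨(i : ℕ) + 1, hi⟩ := by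
    intro b
    rw [map_mul]
    push_cast
    congr 1
    exact hφ i hi
  have key : ∀ y : H, τ (y * a i) = τ y * a ⟨(i : ℕ) + 1, hi⟩ := by
    intro y
    rcases hdecomp y with hy | ⟨b, hb, rfl⟩
    · have h1 : τ y = (φ ⟨y, hy⟩ : H) := hτ1 ⟨y, hy⟩
      have h2 : τ (y * a i) = (φ (⟨y, hy⟩ * ⟨a i, hai⟩) : H) := hτ1 (⟨y, hy⟩ * ⟨a i, hai⟩)
      rw [h2, hφmul, h1]
    · have h1 : τ (a ⟨n - 1, by omega⟩ * b) = a ⟨0, by omega⟩ * h * (φ ⟨b, hb⟩ : H) :=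
        hτ2 ⟨b, hb⟩
      have h2 : τ (a ⟨n - 1, by omega⟩ * (b * a i))
          = a ⟨0, by omega⟩ * h * (φ (⟨b, hb⟩ * ⟨a i, hai⟩) : H) :=
        hτ2 (⟨b, hb⟩ * ⟨a i, hai⟩)
      rw [mul_assoc, h2, hφmul, h1]
      simp [mul_assoc]
  ext x
  simp only [Equiv.Perm.mul_apply, Equiv.coe_mulRight]
  rw [show τ⁻¹ x = τ.symm x from rfl, key, Equiv.apply_symm_apply]

end HAT
end

section
/- Let Γ be a finite connected tetravalent G-half-arc-transitive graph with G ≤ Aut(Γ). Then G has a normal subgroup N that is semiregular on V(Γ) such that the normal quotient Γ_N has valency 4 (so Γ is a normal cover of Γ_N), Γ_N is a connected tetravalent G/N-half-arc-transitive graph, and for every normal subgroup M of G properly containing N the normal quotient Γ_M has valency at most 2 (i.e. Γ_N is a basic G/N-half-arc-transitive graph). -/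
open Equiv MulAction

namespace HAT

variable {V : Type*}

/-- The group of permutations of the set of `N`-orbits induced by elements of `G`
(the image of `G` acting on the vertex set of the normal quotient graph; for `N`
normal in `G` this is the action of `G/N` on `Γ_N`). -/
def inducedSubgroup (G N : Subgroup (Equiv.Perm V)) :
    Subgroup (Equiv.Perm (Quotient (MulAction.orbitRel N V))) where
  carrier := {σ | ∃ g ∈ G, ∀ u : V,
    σ (Quotient.mk (MulAction.orbitRel N V) u) = Quotient.mk (MulAction.orbitRel N V) (g u)}
  one_mem' := ⟨1, G.one_mem, fun u => rfl⟩
  mul_mem' := by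
    rintro σ ρ ⟨g, hg, hσ⟩ ⟨k, hk, hρ⟩
    refine ⟨g * k, G.mul_mem hg hk, fun u => ?_⟩
    have : σ (ρ (Quotient.mk (MulAction.orbitRel N V) u))
        = Quotient.mk (MulAction.orbitRel N V) (g (k u)) := by rw [hρ u, hσ (k u)]
    simpa [Equiv.Perm.mul_apply] using this
  inv_mem' := by
    rintro σ ⟨g, hg, hσ⟩
    refine ⟨g⁻¹, G.inv_mem hg, fun u => ?_⟩
    have h1 : σ (Quotient.mk (MulAction.orbitRel N V) (g⁻¹ u))
        = Quotient.mk (MulAction.orbitRel N V) u := by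
      rw [hσ (g⁻¹ u), ← Equiv.Perm.mul_apply, mul_inv_cancel, Equiv.Perm.one_apply]
    calc σ⁻¹ (Quotient.mk (MulAction.orbitRel N V) u)
        = σ⁻¹ (σ (Quotient.mk (MulAction.orbitRel N V) (g⁻¹ u))) := by rw [h1]
      _ = Quotient.mk (MulAction.orbitRel N V) (g⁻¹ u) := Equiv.symm_apply_apply σ _

/-! ### Auxiliary development -/

/-- abbreviation for the quotient map -/
noncomputable abbrev qmk (N : Subgroup (Perm V)) (v : V) : Quotient (orbitRel N V) :=
  Quotient.mk (orbitRel N V) v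

lemma qmk_eq_of {N : Subgroup (Perm V)} {n : Perm V} (hn : n ∈ N) (u : V) :
    qmk N (n u) = qmk N u := by
  apply Quotient.sound
  exact ⟨⟨n, hn⟩, rfl⟩

lemma exists_of_qmk_eq {N : Subgroup (Perm V)} {u v : V} (h : qmk N u = qmk N v) :
    ∃ n ∈ N, n v = u := by
  obtain ⟨⟨n, hn⟩, hnv⟩ := Quotient.exact h
  exact ⟨n, hn, hnv⟩

lemma qmk_surjective (N : Subgroup (Perm V)) : Function.Surjective (qmk N) :=
  Quotient.exists_rep

/-- the permutation of the orbit space induced by `g ∈ G` -/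
noncomputable def indPerm {N G : Subgroup (Perm V)} (hNG : NormalIn N G) {g : Perm V}
    (hg : g ∈ G) : Perm (Quotient (orbitRel N V)) where
  toFun := Quotient.map g (by
    rintro a b ⟨⟨n, hn⟩, rfl⟩
    exact ⟨⟨g * n * g⁻¹, hNG.2 g hg n hn⟩,
      by simp [Subgroup.smul_def, Perm.smul_def, Perm.mul_apply]⟩)
  invFun := Quotient.map ⇑(g⁻¹) (by
    rintro a b ⟨⟨n, hn⟩, rfl⟩
    exact ⟨⟨g⁻¹ * n * g, by simpa using hNG.2 g⁻¹ (G.inv_mem hg) n hn⟩,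
      by simp [Subgroup.smul_def, Perm.smul_def, Perm.mul_apply]⟩)
  left_inv := by
    intro A; induction A using Quotient.inductionOn
    simp [Quotient.map_mk]
  right_inv := by
    intro A; induction A using Quotient.inductionOn
    simp [Quotient.map_mk]

lemma indPerm_apply {N G : Subgroup (Perm V)} (hNG : NormalIn N G) {g : Perm V}
    (hg : g ∈ G) (u : V) : indPerm hNG hg (qmk N u) = qmk N (g u) := rfl

lemma indPerm_mem {N G : Subgroup (Perm V)} (hNG : NormalIn N G) {g : Perm V}
    (hg : g ∈ G) : indPerm hNG hg ∈ inducedSubgroup G N :=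
  ⟨g, hg, fun _ => rfl⟩


lemma mem_aut_iff {Γ : SimpleGraph V} {g : Perm V} :
    g ∈ aut Γ ↔ ∀ u v : V, Γ.Adj (g u) (g v) ↔ Γ.Adj u v := Iff.rfl

/-- representative independence of quotient adjacency -/
lemma exists_rep_adj {Γ : SimpleGraph V} {N : Subgroup (Perm V)} (hNaut : N ≤ aut Γ)
    {A B : Quotient (orbitRel N V)} (hAB : (quotGraph Γ N).Adj A B) {v : V}
    (hv : qmk N v = A) : ∃ w, Γ.Adj v w ∧ qmk N w = B := by
  obtain ⟨hne, u', v', huv, hu', hv'⟩ := hAB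
  obtain ⟨n, hn, hnu⟩ := exists_of_qmk_eq (hv.trans hu'.symm)
  refine ⟨n v', ?_, (qmk_eq_of hn v').trans hv'⟩
  have := (mem_aut_iff.1 (hNaut hn) u' v').2 huv
  rwa [hnu] at this

lemma quot_neighborSet {Γ : SimpleGraph V} {N : Subgroup (Perm V)} (hNaut : N ≤ aut Γ)
    (v : V) : (quotGraph Γ N).neighborSet (qmk N v)
      = (qmk N '' Γ.neighborSet v) \ {qmk N v} := by
  ext B
  constructor
  · intro hB
    obtain ⟨w, hw, hwB⟩ := exists_rep_adj hNaut hB rfl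
    exact ⟨⟨w, hw, hwB⟩, fun h => ((quotGraph Γ N).adj_symm hB).1 (h ▸ rfl)⟩
  · rintro ⟨⟨w, hw, rfl⟩, hne⟩
    exact ⟨fun h => hne (h ▸ rfl), v, w, hw, rfl, rfl⟩

lemma aut_deg {W : Type*} {Λ : SimpleGraph W} {σ : Perm W} (hσ : σ ∈ aut Λ) (A : W) :
    deg Λ (σ A) = deg Λ A := by
  have h : Λ.neighborSet (σ A) = σ '' Λ.neighborSet A := by
    ext w
    constructor
    · intro hw
      refine ⟨σ⁻¹ w, ?_, by simp⟩
      have := (mem_aut_iff.1 hσ A (σ⁻¹ w)).1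
      simp only [Perm.inv_def, Equiv.apply_symm_apply] at this
      exact this hw
    · rintro ⟨u, hu, rfl⟩
      exact (mem_aut_iff.1 hσ A u).2 hu
  rw [deg, h, Set.ncard_image_of_injective _ σ.injective]; rfl

/-- counting: summing fibre sizes of the first projection gives the size of a relation -/
lemma sum_ncard_fst {α : Type*} [Fintype α] (D : Set (α × α)) :
    ∑ a : α, ({b | (a, b) ∈ D} : Set α).ncard = D.ncard := by
  classical
  have e : (Σ a : α, ({b | (a, b) ∈ D} : Set α)) ≃ D :=
    { toFun := fun x => ⟨(x.1, x.2.1), x.2.2⟩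
      invFun := fun p => ⟨p.1.1, p.1.2, p.2⟩
      left_inv := fun ⟨a, ⟨b, h⟩⟩ => rfl
      right_inv := fun ⟨⟨a, b⟩, h⟩ => rfl }
  have h1 := Fintype.card_congr e
  rw [Fintype.card_sigma] at h1
  simpa [← Nat.card_coe_set_eq, Nat.card_eq_fintype_card] using h1

lemma sum_ncard_snd {α : Type*} [Fintype α] (D : Set (α × α)) :
    ∑ b : α, ({a | (a, b) ∈ D} : Set α).ncard = D.ncard := by
  classical
  have e : (Σ b : α, ({a | (a, b) ∈ D} : Set α)) ≃ D :=
    { toFun := fun x => ⟨(x.2.1, x.1), x.2.2⟩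
      invFun := fun p => ⟨p.1.2, p.1.1, p.2⟩
      left_inv := fun ⟨a, ⟨b, h⟩⟩ => rfl
      right_inv := fun ⟨⟨a, b⟩, h⟩ => rfl }
  have h1 := Fintype.card_congr e
  rw [Fintype.card_sigma] at h1
  simpa [← Nat.card_coe_set_eq, Nat.card_eq_fintype_card] using h1

/-- if in a finite nonempty digraph all out-degrees are `o` and all in-degrees are `i`,
then `o = i`. -/
lemma out_eq_in {α : Type*} [Fintype α] [Nonempty α] (D : Set (α × α)) {o i : ℕ}
    (ho : ∀ a : α, ({b | (a, b) ∈ D} : Set α).ncard = o)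
    (hi : ∀ b : α, ({a | (a, b) ∈ D} : Set α).ncard = i) : o = i := by
  have h1 := sum_ncard_fst D
  have h2 := sum_ncard_snd D
  simp only [ho] at h1
  simp only [hi] at h2
  rw [Finset.sum_const, Finset.card_univ, smul_eq_mul] at h1 h2
  have := h1.trans h2.symm
  exact Nat.eq_of_mul_eq_mul_left Fintype.card_pos this


lemma exists_orientation {V : Type} [Fintype V] {Γ : SimpleGraph V} {G : Subgroup (Perm V)}
    (hGA : G ≤ aut Γ) (hconn : Γ.Connected) (htetra : ∀ u : V, deg Γ u = 4)
    (hHAT : IsHAT Γ G) :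
    ∃ O : Set (V × V),
      (∀ p ∈ O, Γ.Adj p.1 p.2) ∧
      (∀ g ∈ G, ∀ p ∈ O, ((g p.1 : V), g p.2) ∈ O) ∧
      (∀ u v : V, Γ.Adj u v → ¬((u, v) ∈ O ∧ (v, u) ∈ O)) ∧
      (∀ u v : V, Γ.Adj u v → (u, v) ∈ O ∨ (v, u) ∈ O) ∧
      (∀ v : V, ({w | (v, w) ∈ O} : Set V).ncard = 2) ∧
      (∀ v : V, ({w | (w, v) ∈ O} : Set V).ncard = 2) := by
  have hne : Nonempty V := hconn.nonempty
  obtain ⟨u0⟩ := id hne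
  have hns : (Γ.neighborSet u0).Nonempty := by
    apply Set.nonempty_of_ncard_ne_zero
    have h4 := htetra u0
    unfold deg at h4
    omega
  obtain ⟨v0, hv0⟩ := hns
  have h0 : Γ.Adj u0 v0 := hv0
  set O : Set (V × V) := {p | ∃ g ∈ G, g u0 = p.1 ∧ g v0 = p.2} with hO
  have hadj : ∀ p ∈ O, Γ.Adj p.1 p.2 := by
    rintro ⟨u, v⟩ ⟨g, hg, rfl, rfl⟩
    exact (hGA hg u0 v0).2 h0
  have hinv : ∀ g ∈ G, ∀ p ∈ O, ((g p.1 : V), g p.2) ∈ O := by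
    rintro g hg ⟨u, v⟩ ⟨k, hk, rfl, rfl⟩
    exact ⟨g * k, G.mul_mem hg hk, rfl, rfl⟩
  have htot : ∀ u v : V, Γ.Adj u v → (u, v) ∈ O ∨ (v, u) ∈ O := by
    intro u v huv
    obtain ⟨g, hg, h | h⟩ := hHAT.2.1 h0 huv
    · exact Or.inl ⟨g, hg, h.1, h.2⟩
    · exact Or.inr ⟨g, hg, h.1, h.2⟩
  have hexcl : ∀ u v : V, Γ.Adj u v → ¬((u, v) ∈ O ∧ (v, u) ∈ O) := by
    rintro u v huv ⟨⟨g1, hg1, e11, e12⟩, ⟨g2, hg2, e21, e22⟩⟩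
    dsimp only at e11 e12 e21 e22
    apply hHAT.2.2
    have hswap : ∃ s ∈ G, s u0 = v0 ∧ s v0 = u0 := by
      refine ⟨g1⁻¹ * g2, G.mul_mem (G.inv_mem hg1) hg2, ?_, ?_⟩
      · show g1⁻¹ (g2 u0) = v0
        rw [e21, ← e12, Perm.inv_def, Equiv.symm_apply_apply]
      · show g1⁻¹ (g2 v0) = u0
        rw [e22, ← e11, Perm.inv_def, Equiv.symm_apply_apply]
    obtain ⟨s, hs, hs1, hs2⟩ := hswap
    have harc : ∀ a b : V, Γ.Adj a b → ∃ g ∈ G, g u0 = a ∧ g v0 = b := by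
      intro a b hab
      obtain ⟨g, hg, h | h⟩ := hHAT.2.1 h0 hab
      · exact ⟨g, hg, h.1, h.2⟩
      · refine ⟨g * s, G.mul_mem hg hs, ?_, ?_⟩
        · show g (s u0) = a
          rw [hs1, h.2]
        · show g (s v0) = b
          rw [hs2, h.1]
    intro a b x y hab hxy
    obtain ⟨g, hg, hg1', hg2'⟩ := harc a b hab
    obtain ⟨h, hh, hh1, hh2⟩ := harc x y hxy
    refine ⟨h * g⁻¹, G.mul_mem hh (G.inv_mem hg), ?_, ?_⟩
    · show h (g⁻¹ a) = x
      rw [← hg1', Perm.inv_def, Equiv.symm_apply_apply, hh1]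
    · show h (g⁻¹ b) = y
      rw [← hg2', Perm.inv_def, Equiv.symm_apply_apply, hh2]
  have hsum : ∀ v : V, ({w | (v, w) ∈ O} : Set V).ncard + ({w | (w, v) ∈ O} : Set V).ncard = 4 := by
    intro v
    have hdisj : Disjoint ({w | (v, w) ∈ O} : Set V) {w | (w, v) ∈ O} := by
      rw [Set.disjoint_left]
      intro w hw1 hw2
      exact hexcl v w (hadj _ hw1) ⟨hw1, hw2⟩
    have hun : ({w | (v, w) ∈ O} : Set V) ∪ {w | (w, v) ∈ O} = Γ.neighborSet v := by
      ext w
      constructor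
      · rintro (hw | hw)
        · exact hadj _ hw
        · exact (hadj _ hw).symm
      · intro hw
        exact htot v w hw
    rw [← Set.ncard_union_eq hdisj (Set.toFinite _) (Set.toFinite _), hun]
    exact htetra v
  have himg : ∀ g ∈ G, ∀ v : V, ({w | ((g v : V), w) ∈ O} : Set V) = g '' {w | (v, w) ∈ O} := by
    intro g hg v
    ext w
    constructor
    · intro hw
      refine ⟨g⁻¹ w, ?_, by simp⟩
      have := hinv g⁻¹ (G.inv_mem hg) _ hw
      simpa using this
    · rintro ⟨u, hu, rfl⟩
      exact hinv g hg _ hu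
  have himg' : ∀ g ∈ G, ∀ v : V, ({w | (w, (g v : V)) ∈ O} : Set V) = g '' {w | (w, v) ∈ O} := by
    intro g hg v
    ext w
    constructor
    · intro hw
      refine ⟨g⁻¹ w, ?_, by simp⟩
      have := hinv g⁻¹ (G.inv_mem hg) _ hw
      simpa using this
    · rintro ⟨u, hu, rfl⟩
      exact hinv g hg _ hu
  set c := ({w | (u0, w) ∈ O} : Set V).ncard with hc
  have hov : ∀ v : V, ({w | (v, w) ∈ O} : Set V).ncard = c := by
    intro v
    obtain ⟨g, hg, rfl⟩ := hHAT.1 u0 v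
    rw [himg g hg u0, Set.ncard_image_of_injective _ g.injective]
  have hiv : ∀ v : V, ({w | (w, v) ∈ O} : Set V).ncard = 4 - c := by
    intro v
    have := hsum v
    rw [hov v] at this
    omega
  have hc2 : c = 2 := by
    have := out_eq_in O hov hiv
    have h4 := hsum u0
    omega
  exact ⟨O, hadj, hinv, hexcl, htot, fun v => by rw [hov v, hc2],
    fun v => by rw [hiv v, hc2]⟩

section Quot
variable {Γ : SimpleGraph V} {N G : Subgroup (Perm V)}

lemma induced_le_aut (hNG : NormalIn N G) (hGA : G ≤ aut Γ) :
    inducedSubgroup G N ≤ aut (quotGraph Γ N) := by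
  have key : ∀ σ ∈ inducedSubgroup G N, ∀ A B, (quotGraph Γ N).Adj A B →
      (quotGraph Γ N).Adj (σ A) (σ B) := by
    rintro σ ⟨g, hg, hσ⟩ A B ⟨hne, u, v, huv, rfl, rfl⟩
    refine ⟨fun h => hne (σ.injective h), g u, g v, (hGA hg u v).2 huv, ?_, ?_⟩
    · rw [hσ u]
    · rw [hσ v]
  intro σ hσ
  rw [mem_aut_iff]
  intro A B
  constructor
  · intro h
    have h2 := key σ⁻¹ ((inducedSubgroup G N).inv_mem hσ) _ _ h
    simpa using h2
  · exact key σ hσ A B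

lemma vertexTrans_induced (hNG : NormalIn N G) (hVT : VertexTrans G) :
    VertexTrans (inducedSubgroup G N) := by
  intro A B
  obtain ⟨u, rfl⟩ := qmk_surjective N A
  obtain ⟨v, rfl⟩ := qmk_surjective N B
  obtain ⟨g, hg, rfl⟩ := hVT u v
  exact ⟨indPerm hNG hg, indPerm_mem hNG hg, rfl⟩

lemma edgeTrans_induced (hNG : NormalIn N G) (hET : EdgeTrans Γ G) :
    EdgeTrans (quotGraph Γ N) (inducedSubgroup G N) := by
  rintro A B C D ⟨hne1, u, v, huv, rfl, rfl⟩ ⟨hne2, x, y, hxy, rfl, rfl⟩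
  obtain ⟨g, hg, h | h⟩ := hET huv hxy
  · refine ⟨indPerm hNG hg, indPerm_mem hNG hg, Or.inl ⟨?_, ?_⟩⟩
    · rw [indPerm_apply hNG hg, h.1]
    · rw [indPerm_apply hNG hg, h.2]
  · refine ⟨indPerm hNG hg, indPerm_mem hNG hg, Or.inr ⟨?_, ?_⟩⟩
    · rw [indPerm_apply hNG hg, h.1]
    · rw [indPerm_apply hNG hg, h.2]

lemma connected_quot (hconn : Γ.Connected) : (quotGraph Γ N).Connected := by
  have key : ∀ u v : V, (quotGraph Γ N).Reachable (qmk N u) (qmk N v) := by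
    intro u v
    obtain ⟨w⟩ := hconn u v
    induction w with
    | nil => exact SimpleGraph.Reachable.refl _
    | @cons a b c hab p ih =>
        refine SimpleGraph.Reachable.trans ?_ ih
        by_cases h : qmk N a = qmk N b
        · rw [h]
        · exact SimpleGraph.Adj.reachable ⟨h, a, b, hab, rfl, rfl⟩
  rw [SimpleGraph.connected_iff]
  refine ⟨?_, ⟨qmk N hconn.nonempty.some⟩⟩
  intro A B
  obtain ⟨u, rfl⟩ := qmk_surjective N A
  obtain ⟨v, rfl⟩ := qmk_surjective N B
  exact key u v

variable [Fintype V]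

lemma deg_quot_le_four (hNaut : N ≤ aut Γ) (htetra : ∀ u : V, deg Γ u = 4) (v : V) :
    deg (quotGraph Γ N) (qmk N v) ≤ 4 := by
  rw [deg, quot_neighborSet hNaut v]
  calc ((qmk N '' Γ.neighborSet v) \ {qmk N v}).ncard
      ≤ (qmk N '' Γ.neighborSet v).ncard :=
        Set.ncard_le_ncard Set.diff_subset (Set.toFinite _)
    _ ≤ (Γ.neighborSet v).ncard := Set.ncard_image_le (Set.toFinite _)
    _ = 4 := htetra v

lemma deg4_inj (hNaut : N ≤ aut Γ) (htetra : ∀ u : V, deg Γ u = 4) {v : V}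
    (h4 : deg (quotGraph Γ N) (qmk N v) = 4) :
    Set.InjOn (qmk N) (Γ.neighborSet v) ∧ qmk N v ∉ qmk N '' Γ.neighborSet v := by
  rw [deg, quot_neighborSet hNaut v] at h4
  have himg_le : (qmk N '' Γ.neighborSet v).ncard ≤ 4 := by
    calc (qmk N '' Γ.neighborSet v).ncard ≤ (Γ.neighborSet v).ncard :=
        Set.ncard_image_le (Set.toFinite _)
      _ = 4 := htetra v
  have hnotmem : qmk N v ∉ qmk N '' Γ.neighborSet v := by
    intro hmem
    have := Set.ncard_diff_singleton_lt_of_mem hmem (Set.toFinite _)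
    omega
  have hdiff : (qmk N '' Γ.neighborSet v) \ {qmk N v} = qmk N '' Γ.neighborSet v := by
    rw [Set.diff_singleton_eq_self hnotmem]
  rw [hdiff] at h4
  refine ⟨Set.injOn_of_ncard_image_eq ?_ (Set.toFinite _), hnotmem⟩
  rw [h4]
  exact (htetra v).symm

lemma not_arcTrans_induced (hNG : NormalIn N G) (hGA : G ≤ aut Γ)
    (htetra : ∀ u : V, deg Γ u = 4)
    (hdeg4 : ∀ A, deg (quotGraph Γ N) A = 4) (hnAT : ¬ ArcTrans Γ G) :
    ¬ ArcTrans (quotGraph Γ N) (inducedSubgroup G N) := by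
  have hNaut : N ≤ aut Γ := le_trans hNG.1 hGA
  intro hAT
  apply hnAT
  intro u v x y huv hxy
  obtain ⟨hinj_u, hnm_u⟩ := deg4_inj hNaut htetra (hdeg4 (qmk N u))
  obtain ⟨hinj_x, hnm_x⟩ := deg4_inj hNaut htetra (hdeg4 (qmk N x))
  have hne1 : qmk N u ≠ qmk N v := fun h => hnm_u ⟨v, huv, h.symm⟩
  have hne2 : qmk N x ≠ qmk N y := fun h => hnm_x ⟨y, hxy, h.symm⟩
  have hquv : (quotGraph Γ N).Adj (qmk N u) (qmk N v) := ⟨hne1, u, v, huv, rfl, rfl⟩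
  have hqxy : (quotGraph Γ N).Adj (qmk N x) (qmk N y) := ⟨hne2, x, y, hxy, rfl, rfl⟩
  obtain ⟨σ, hσ, h1, h2⟩ := hAT hquv hqxy
  obtain ⟨g, hg, hσg⟩ := hσ
  have e1 : qmk N x = qmk N (g u) := h1.symm.trans (hσg u)
  have e2 : qmk N y = qmk N (g v) := h2.symm.trans (hσg v)
  obtain ⟨n, hn, hng⟩ := exists_of_qmk_eq e1
  set k : Perm V := n * g with hk
  have hkG : k ∈ G := G.mul_mem (hNG.1 hn) hg
  have hku : k u = x := hng
  have hkv_adj : Γ.Adj x (k v) := by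
    have := (hGA hkG u v).2 huv
    rwa [hku] at this
  have hkv_q : qmk N (k v) = qmk N y := by
    have : qmk N (k v) = qmk N (g v) := qmk_eq_of hn (g v)
    rw [this, e2]
  have hy : Γ.Adj x y := hxy
  have : k v = y := hinj_x hkv_adj hy hkv_q
  exact ⟨k, hkG, hku, this⟩

lemma semiregular_of_deg4 (hNaut : N ≤ aut Γ) (hconn : Γ.Connected)
    (htetra : ∀ u : V, deg Γ u = 4)
    (hdeg4 : ∀ A, deg (quotGraph Γ N) A = 4) : Semiregular N := by
  intro n hn v hv
  have step : ∀ a b : V, Γ.Walk a b → n a = a → n b = b := by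
    intro a b w
    induction w with
    | nil => exact fun h => h
    | @cons a b c hab p ih =>
        intro hna
        apply ih
        have hadj : Γ.Adj a (n b) := by
          have := (mem_aut_iff.1 (hNaut hn) a b).2 hab
          rwa [hna] at this
        exact (deg4_inj hNaut htetra (hdeg4 (qmk N a))).1 hadj hab (qmk_eq_of hn b)
  apply Equiv.ext
  intro u
  obtain ⟨w⟩ := hconn v u
  exact step v u w hv

lemma deg_quot_const (hNG : NormalIn N G) (hGA : G ≤ aut Γ) (hVT : VertexTrans G)
    (A B : Quotient (orbitRel N V)) :
    deg (quotGraph Γ N) A = deg (quotGraph Γ N) B := by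
  obtain ⟨σ, hσ, rfl⟩ := vertexTrans_induced hNG hVT A B
  exact (aut_deg (induced_le_aut hNG hGA hσ) A).symm

lemma qmk_bot_injective : Function.Injective (qmk (⊥ : Subgroup (Perm V))) := by
  intro u v h
  obtain ⟨m, hm, hmv⟩ := exists_of_qmk_eq h
  rw [Subgroup.mem_bot] at hm
  rw [hm] at hmv
  exact hmv.symm

lemma deg_bot (Γ : SimpleGraph V) (htetra : ∀ u : V, deg Γ u = 4) :
    ∀ A, deg (quotGraph Γ (⊥ : Subgroup (Perm V))) A = 4 := by
  intro A
  obtain ⟨v, rfl⟩ := qmk_surjective _ A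
  rw [deg, quot_neighborSet bot_le v]
  have hnm : qmk (⊥ : Subgroup (Perm V)) v ∉ qmk ⊥ '' Γ.neighborSet v := by
    rintro ⟨w, hw, hwv⟩
    have := qmk_bot_injective hwv
    rw [this] at hw
    exact Γ.irrefl hw
  rw [Set.diff_singleton_eq_self hnm,
    Set.ncard_image_of_injective _ qmk_bot_injective]
  exact htetra v

end Quot

lemma deg_quot_ne_three {V : Type} [Fintype V] {Γ : SimpleGraph V} {G M : Subgroup (Perm V)}
    (hGA : G ≤ aut Γ) (hconn : Γ.Connected) (htetra : ∀ u : V, deg Γ u = 4)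
    (hHAT : IsHAT Γ G) (hMG : NormalIn M G) (A : Quotient (orbitRel M V)) :
    deg (quotGraph Γ M) A ≠ 3 := by
  classical
  obtain ⟨O, hadj, hinv, hexcl, htot, hout2, hin2⟩ := exists_orientation hGA hconn htetra hHAT
  have hMaut : M ≤ aut Γ := le_trans hMG.1 hGA
  haveI : Nonempty V := hconn.nonempty
  letI : Fintype (Quotient (orbitRel M V)) := Fintype.ofFinite _
  haveI : Nonempty (Quotient (orbitRel M V)) := ⟨qmk M (Classical.arbitrary V)⟩
  set Q : Set (Quotient (orbitRel M V) × Quotient (orbitRel M V)) :=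
    {q | ∃ p ∈ O, qmk M p.1 = q.1 ∧ qmk M p.2 = q.2} with hQ
  -- representative description of the out- and in-sets in the quotient digraph
  have hrep_out : ∀ v : V, {B | (qmk M v, B) ∈ Q} = qmk M '' {w | (v, w) ∈ O} := by
    intro v
    ext B
    constructor
    · rintro ⟨⟨a, b⟩, hab, ha, rfl⟩
      obtain ⟨n, hn, hna⟩ := exists_of_qmk_eq ha.symm
      refine ⟨n b, ?_, qmk_eq_of hn b⟩
      have := hinv n (hMG.1 hn) _ hab
      rwa [hna] at this
    · rintro ⟨w, hw, rfl⟩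
      exact ⟨(v, w), hw, rfl, rfl⟩
  have hrep_in : ∀ v : V, {B | (B, qmk M v) ∈ Q} = qmk M '' {w | (w, v) ∈ O} := by
    intro v
    ext B
    constructor
    · rintro ⟨⟨a, b⟩, hab, rfl, hb⟩
      obtain ⟨n, hn, hnb⟩ := exists_of_qmk_eq hb.symm
      refine ⟨n a, ?_, qmk_eq_of hn a⟩
      have := hinv n (hMG.1 hn) _ hab
      rwa [hnb] at this
    · rintro ⟨w, hw, rfl⟩
      exact ⟨(w, v), hw, rfl, rfl⟩
  -- invariance of Q under the induced group
  have hQinv : ∀ σ ∈ inducedSubgroup G M, ∀ q ∈ Q, ((σ q.1 : _), σ q.2) ∈ Q := by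
    rintro σ ⟨g, hg, hσ⟩ ⟨B, C⟩ ⟨⟨a, b⟩, hab, ha, hb⟩
    dsimp only at ha hb ⊢
    refine ⟨(g a, g b), hinv g hg _ hab, ?_, ?_⟩
    · show qmk M (g a) = σ B
      rw [← ha]
      exact (hσ a).symm
    · show qmk M (g b) = σ C
      rw [← hb]
      exact (hσ b).symm
  have hQout : ∀ σ ∈ inducedSubgroup G M, ∀ B, {C | ((σ B : _), C) ∈ Q} = σ '' {C | (B, C) ∈ Q} := by
    intro σ hσ B
    ext C
    constructor
    · intro hC
      refine ⟨σ⁻¹ C, ?_, by simp⟩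
      have := hQinv σ⁻¹ ((inducedSubgroup G M).inv_mem hσ) _ hC
      simpa using this
    · rintro ⟨D, hD, rfl⟩
      exact hQinv σ hσ (B, D) hD
  have hQin : ∀ σ ∈ inducedSubgroup G M, ∀ B, {C | (C, (σ B : _)) ∈ Q} = σ '' {C | (C, B) ∈ Q} := by
    intro σ hσ B
    ext C
    constructor
    · intro hC
      refine ⟨σ⁻¹ C, ?_, by simp⟩
      have := hQinv σ⁻¹ ((inducedSubgroup G M).inv_mem hσ) _ hC
      simpa using this
    · rintro ⟨D, hD, rfl⟩
      exact hQinv σ hσ (D, B) hD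
  -- out-degrees and in-degrees in the quotient digraph are constant
  set o : ℕ := ({C | (A, C) ∈ Q} : Set _).ncard with ho
  set i : ℕ := ({C | (C, A) ∈ Q} : Set _).ncard with hi
  have hoc : ∀ B, ({C | (B, C) ∈ Q} : Set _).ncard = o := by
    intro B
    obtain ⟨σ, hσ, rfl⟩ := vertexTrans_induced hMG hHAT.1 A B
    rw [hQout σ hσ A, Set.ncard_image_of_injective _ σ.injective]
  have hic : ∀ B, ({C | (C, B) ∈ Q} : Set _).ncard = i := by
    intro B
    obtain ⟨σ, hσ, rfl⟩ := vertexTrans_induced hMG hHAT.1 A B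
    rw [hQin σ hσ A, Set.ncard_image_of_injective _ σ.injective]
  have hoi : o = i := out_eq_in Q hoc hic
  -- a representative
  obtain ⟨v, rfl⟩ := qmk_surjective M A
  have ho2 : o ≤ 2 := by
    rw [ho, hrep_out v]
    calc (qmk M '' {w | (v, w) ∈ O}).ncard ≤ ({w | (v, w) ∈ O} : Set V).ncard :=
        Set.ncard_image_le (Set.toFinite _)
      _ = 2 := hout2 v
  -- the neighbour set of A in the quotient
  have hNS : Γ.neighborSet v = {w | (v, w) ∈ O} ∪ {w | (w, v) ∈ O} := by
    ext w
    constructor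
    · intro hw
      exact htot v w hw
    · rintro (hw | hw)
      · exact hadj _ hw
      · exact (hadj _ hw).symm
  have hU : qmk M '' Γ.neighborSet v
      = {B | (qmk M v, B) ∈ Q} ∪ {B | (B, qmk M v) ∈ Q} := by
    rw [hNS, Set.image_union, ← hrep_out v, ← hrep_in v]
  intro h3
  rw [deg, quot_neighborSet hMaut v, hU] at h3
  set U : Set (Quotient (orbitRel M V)) :=
    {B | (qmk M v, B) ∈ Q} ∪ {B | (B, qmk M v) ∈ Q} with hUdef
  have hsumU : U.ncard + ({B | (qmk M v, B) ∈ Q} ∩ {B | (B, qmk M v) ∈ Q} : Set _).ncard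
      = o + i := by
    rw [ho, hi]
    exact Set.ncard_union_add_ncard_inter _ _ (Set.toFinite _) (Set.toFinite _)
  by_cases hA : qmk M v ∈ U
  · -- then A is both an out- and in-neighbour of itself
    have hAQ : (qmk M v, qmk M v) ∈ Q := by
      rcases hA with h | h
      · exact h
      · exact h
    have hAint : qmk M v ∈ {B | (qmk M v, B) ∈ Q} ∩ {B | (B, qmk M v) ∈ Q} := ⟨hAQ, hAQ⟩
    have h4 : U.ncard = 4 := by
      have := Set.ncard_diff_singleton_add_one hA (Set.toFinite _)
      omega
    have hge1 : 1 ≤ ({B | (qmk M v, B) ∈ Q} ∩ {B | (B, qmk M v) ∈ Q} : Set _).ncard := by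
      rw [Nat.one_le_iff_ne_zero]
      intro h0
      rw [Set.ncard_eq_zero (Set.toFinite _)] at h0
      rw [h0] at hAint
      exact hAint
    omega
  · rw [Set.diff_singleton_eq_self hA] at h3
    -- U has 3 elements, o = i = 2, intersection is a singleton {B1}
    have hocap : ({B | (qmk M v, B) ∈ Q} ∩ {B | (B, qmk M v) ∈ Q} : Set _).ncard = 1 := by
      omega
    obtain ⟨B1, hB1⟩ := Set.ncard_eq_one.1 hocap
    have ho2' : o = 2 := by omega
    have hB1mem : B1 ∈ {B | (qmk M v, B) ∈ Q} ∩ {B | (B, qmk M v) ∈ Q} := by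
      rw [hB1]; rfl
    -- pick B2 an out-neighbour distinct from B1
    have hne2 : ({B | (qmk M v, B) ∈ Q} \ {B1} : Set _).Nonempty := by
      rw [Set.nonempty_iff_ne_empty]
      intro h0
      rw [Set.diff_eq_empty] at h0
      have := Set.ncard_le_ncard h0 (Set.toFinite _)
      rw [Set.ncard_singleton] at this
      rw [ho] at ho2'
      omega
    obtain ⟨B2, hB2out, hB2ne⟩ := hne2
    have hB2ne : B2 ≠ B1 := hB2ne
    have hB2notin : B2 ∉ {B | (B, qmk M v) ∈ Q} := by
      intro hB2in
      have : B2 ∈ ({B1} : Set _) := hB1 ▸ ⟨hB2out, hB2in⟩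
      exact hB2ne this
    -- both B1 and B2 are neighbours of A in the quotient
    have hAdj1 : (quotGraph Γ M).Adj (qmk M v) B1 := by
      have : B1 ∈ (quotGraph Γ M).neighborSet (qmk M v) := by
        rw [quot_neighborSet hMaut v, hU, Set.diff_singleton_eq_self hA]
        exact Or.inl hB1mem.1
      exact this
    have hAdj2 : (quotGraph Γ M).Adj (qmk M v) B2 := by
      have : B2 ∈ (quotGraph Γ M).neighborSet (qmk M v) := by
        rw [quot_neighborSet hMaut v, hU, Set.diff_singleton_eq_self hA]
        exact Or.inl hB2out
      exact this
    -- edge-transitivity moves the two-way edge A-B1 to the one-way edge A-B2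
    obtain ⟨σ, hσ, hcase⟩ := edgeTrans_induced hMG hHAT.2.1 hAdj1 hAdj2
    rcases hcase with ⟨hσA, hσB1⟩ | ⟨hσA, hσB1⟩
    · have := hQinv σ hσ (B1, qmk M v) hB1mem.2
      dsimp only at this
      rw [hσA, hσB1] at this
      exact hB2notin this
    · have := hQinv σ hσ (qmk M v, B1) hB1mem.1
      dsimp only at this
      rw [hσA, hσB1] at this
      exact hB2notin this

lemma subgroup_card_lt {V : Type} [Fintype V] {N M : Subgroup (Perm V)} (h : N < M) :
    Nat.card N < Nat.card M := by
  have h2 : (N : Set (Perm V)) ⊂ (M : Set (Perm V)) := SetLike.coe_ssubset_coe.2 h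
  have := Set.ncard_lt_ncard h2 (Set.toFinite _)
  rw [← Nat.card_coe_set_eq, ← Nat.card_coe_set_eq] at this
  exact this

/-- **Lemma (reduction to basic pairs).** Every finite connected tetravalent
`G`-half-arc-transitive graph `Γ` has a normal subgroup `N` of `G`, semiregular on the
vertices, such that `Γ` is a normal cover of `Γ_N` (i.e. `Γ_N` has valency `4`), `Γ_N` is
a connected tetravalent `G/N`-half-arc-transitive graph (for the induced action of `G`
on the `N`-orbits), and the quotient by any strictly larger normal subgroup of `G` has
valency at most `2`, i.e. `Γ_N` is basic. -/
theorem lem_cover_basic {V : Type} [Fintype V] (Γ : SimpleGraph V)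
    (G : Subgroup (Equiv.Perm V)) (hGA : G ≤ aut Γ)
    (hconn : Γ.Connected) (htetra : ∀ u : V, deg Γ u = 4)
    (hHAT : IsHAT Γ G) :
    ∃ N : Subgroup (Equiv.Perm V), NormalIn N G ∧ Semiregular N ∧
      (∀ A, deg (quotGraph Γ N) A = 4) ∧
      (quotGraph Γ N).Connected ∧
      inducedSubgroup G N ≤ aut (quotGraph Γ N) ∧
      IsHAT (quotGraph Γ N) (inducedSubgroup G N) ∧
      ∀ M : Subgroup (Equiv.Perm V), NormalIn M G → N < M →
        ∀ A, deg (quotGraph Γ M) A ≤ 2 := by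
  classical
  set S : Set (Subgroup (Perm V)) :=
    {N | NormalIn N G ∧ ∀ A, deg (quotGraph Γ N) A = 4} with hS
  have hbot : (⊥ : Subgroup (Perm V)) ∈ S := by
    refine ⟨⟨bot_le, ?_⟩, deg_bot Γ htetra⟩
    intro g hg x hx
    rw [Subgroup.mem_bot] at hx
    simp [hx]
  obtain ⟨N, hNS, hmax⟩ :=
    Set.Finite.exists_maximalFor (fun N : Subgroup (Perm V) => Nat.card N) S
      (Set.toFinite _) ⟨⊥, hbot⟩
  obtain ⟨hNG, hdeg4⟩ := hNS
  have hNaut : N ≤ aut Γ := le_trans hNG.1 hGA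
  refine ⟨N, hNG, semiregular_of_deg4 hNaut hconn htetra hdeg4, hdeg4,
    connected_quot hconn, induced_le_aut hNG hGA,
    ⟨vertexTrans_induced hNG hHAT.1, edgeTrans_induced hNG hHAT.2.1,
      not_arcTrans_induced hNG hGA htetra hdeg4 hHAT.2.2⟩, ?_⟩
  intro M hMG hNM A
  by_contra hle
  push_neg at hle
  have hMaut : M ≤ aut Γ := le_trans hMG.1 hGA
  have h4A : deg (quotGraph Γ M) A = 4 := by
    have hle4 : deg (quotGraph Γ M) A ≤ 4 := by
      obtain ⟨v, rfl⟩ := qmk_surjective M A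
      exact deg_quot_le_four hMaut htetra v
    have hne3 := deg_quot_ne_three hGA hconn htetra hHAT hMG A
    omega
  have hMS : M ∈ S := by
    refine ⟨hMG, fun B => ?_⟩
    rw [deg_quot_const hMG hGA hHAT.1 B A, h4A]
  have hcard := subgroup_card_lt hNM
  have := hmax hMS (le_of_lt hcard)
  simp only at this
  omega

end HAT
end
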